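/- arXiv:2101.04143 — 14 statements merged into one kernel-verified Lean document; each statement's English description precedes it below -/
import Mathlib

section
/- Let X be an n×n doubly stochastic matrix and let σ_1, σ_2, …, σ_k be permutations of {1,…,n} that are pairwise disjoint (σ_s(i) ≠ σ_t(i) for every i and every s ≠ t) and such that each σ_t gives a zero diagonal of X (x_{i,σ_t(i)} = 0 for all i and all t ≤ k). Assume there is a constant c such that every permutation τ of {1,…,n} that is disjoint from all σ_1, …, σ_k (i.e., τ(i) ≠ σ_t(i) for all i and all t) has diagonal sum ∑_{i=1}^n x_{i,τ(i)} = c. Then every entry of X not on any of the diagonals of σ_1, …, σ_k equals 1/(n−k), i.e., x_{ij} = 1/(n−k) whenever j ≠ σ_t(i) for all t ≤ k. -/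
open Finset

private lemma permMatrix_apply'' {n : ℕ} (τ : Equiv.Perm (Fin n)) (i j : Fin n) :
    τ.permMatrix ℝ i j = if τ i = j then 1 else 0 := by
  simp [Equiv.Perm.permMatrix, PEquiv.toMatrix_apply, Equiv.toPEquiv_apply, Option.mem_def,
    eq_comm]

/-- Key lemma: pairing a matrix `Y` whose allowed diagonal sums are all `e` against a
doubly stochastic matrix `M` vanishing on the forbidden diagonals yields `e`. -/
private lemma key_pairing {n k : ℕ} (σ : Fin k → Equiv.Perm (Fin n))
    (M : Matrix (Fin n) (Fin n) ℝ) (hM : M ∈ doublyStochastic ℝ (Fin n))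
    (hMzero : ∀ (t : Fin k) (i : Fin n), M i (σ t i) = 0)
    (Y : Matrix (Fin n) (Fin n) ℝ) (e : ℝ)
    (hY : ∀ τ : Equiv.Perm (Fin n), (∀ (i : Fin n) (t : Fin k), τ i ≠ σ t i) →
      ∑ i, Y i (τ i) = e) :
    ∑ i, ∑ j, Y i j * M i j = e := by
  obtain ⟨w, hw0, hw1, hwM⟩ := exists_eq_sum_perm_of_mem_doublyStochastic hM
  have hM_apply : ∀ i j, M i j = ∑ τ : Equiv.Perm (Fin n), w τ * (if τ i = j then 1 else 0) := by
    intro i j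
    rw [← hwM]
    rw [Matrix.sum_apply]
    simp [permMatrix_apply'', Equiv.toPEquiv_apply, mul_ite]
  have hallow : ∀ τ : Equiv.Perm (Fin n), w τ ≠ 0 →
      (∀ (i : Fin n) (t : Fin k), τ i ≠ σ t i) := by
    intro τ hwτ i t hτ
    have h0 : ∑ υ : Equiv.Perm (Fin n), w υ * (if υ i = σ t i then 1 else 0) = 0 := by
      rw [← hM_apply]; exact hMzero t i
    have hnn : ∀ υ ∈ (univ : Finset (Equiv.Perm (Fin n))),
        0 ≤ w υ * (if υ i = σ t i then 1 else 0) := by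
      intro υ _
      have := hw0 υ
      positivity
    have := (Finset.sum_eq_zero_iff_of_nonneg hnn).1 h0 τ (mem_univ τ)
    rw [if_pos hτ, mul_one] at this
    exact hwτ this
  have hstep : ∀ i, ∑ j, Y i j * M i j = ∑ τ : Equiv.Perm (Fin n), w τ * Y i (τ i) := by
    intro i
    simp_rw [hM_apply, Finset.mul_sum]
    rw [Finset.sum_comm]
    refine Finset.sum_congr rfl fun τ _ => ?_
    simp [mul_ite]
    ring
  calc ∑ i, ∑ j, Y i j * M i j
      = ∑ i, ∑ τ : Equiv.Perm (Fin n), w τ * Y i (τ i) := by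
        exact Finset.sum_congr rfl fun i _ => hstep i
    _ = ∑ τ : Equiv.Perm (Fin n), w τ * ∑ i, Y i (τ i) := by
        rw [Finset.sum_comm]
        simp [Finset.mul_sum]
    _ = ∑ τ : Equiv.Perm (Fin n), w τ * e := by
        refine Finset.sum_congr rfl fun τ _ => ?_
        rcases eq_or_ne (w τ) 0 with h | h
        · rw [h, zero_mul, zero_mul]
        · rw [hY τ (hallow τ h)]
    _ = e := by rw [← Finset.sum_mul, hw1, one_mul]

/-- Sinkhorn/Balasubramanian: if a doubly stochastic matrix `X` has `k` pairwise
disjoint zero diagonals and all diagonal sums avoiding these diagonals equal a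
constant, then every entry off those diagonals equals `1/(n-k)`. -/
theorem sinkhorn_balasubramanian {n k : ℕ} (X : Matrix (Fin n) (Fin n) ℝ)
    (hnonneg : ∀ i j, 0 ≤ X i j)
    (hrow : ∀ i, ∑ j, X i j = 1)
    (hcol : ∀ j, ∑ i, X i j = 1)
    (σ : Fin k → Equiv.Perm (Fin n))
    (hdisj : ∀ (i : Fin n) (s t : Fin k), s ≠ t → σ s i ≠ σ t i)
    (hzero : ∀ (t : Fin k) (i : Fin n), X i (σ t i) = 0)
    (c : ℝ)
    (hconst : ∀ τ : Equiv.Perm (Fin n), (∀ (i : Fin n) (t : Fin k), τ i ≠ σ t i) →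
      ∑ i, X i (τ i) = c) :
    ∀ i j, (∀ t : Fin k, j ≠ σ t i) → X i j = 1 / ((n : ℝ) - (k : ℝ)) := by
  intro i0 j0 hj0
  -- k < n
  have hkn : k < n := by
    have hinj : Function.Injective (fun t => σ t i0) := by
      intro s t h
      by_contra hst
      exact hdisj i0 s t hst h
    have hsub : Finset.univ.image (fun t => σ t i0) ⊆ Finset.univ.erase j0 := by
      intro x hx
      simp only [Finset.mem_image, Finset.mem_univ, true_and] at hx
      obtain ⟨t, rfl⟩ := hx
      exact Finset.mem_erase.2 ⟨fun h => hj0 t h.symm, Finset.mem_univ _⟩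
    have h1 : (Finset.univ.image (fun t => σ t i0)).card = k := by
      rw [Finset.card_image_of_injective _ hinj, Finset.card_univ, Fintype.card_fin]
    have h2 : (Finset.univ.erase j0).card = n - 1 := by
      rw [Finset.card_erase_of_mem (Finset.mem_univ _), Finset.card_univ, Fintype.card_fin]
    have := Finset.card_le_card hsub
    rw [h1, h2] at this
    have hn : 0 < n := i0.pos
    omega
  set d : ℕ := n - k with hd
  have hd0 : 0 < d := Nat.sub_pos_of_lt hkn
  have hdR : ((d : ℝ)) ≠ 0 := Nat.cast_ne_zero.2 hd0.ne'
  -- the candidate constant matrix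
  set J : Matrix (Fin n) (Fin n) ℝ :=
    Matrix.of (fun i j => if ∀ t : Fin k, j ≠ σ t i then (d : ℝ)⁻¹ else 0) with hJ
  have hJ_apply : ∀ i j, J i j = if ∀ t : Fin k, j ≠ σ t i then (d : ℝ)⁻¹ else 0 :=
    fun i j => rfl
  -- row filter cardinality
  have hrowcard : ∀ i : Fin n,
      (Finset.univ.filter (fun j => ∀ t : Fin k, j ≠ σ t i)).card = d := by
    intro i
    have hinj : Function.Injective (fun t => σ t i) := by
      intro s t h
      by_contra hst
      exact hdisj i s t hst h
    have hneg : Finset.univ.filter (fun j => ¬ ∀ t : Fin k, j ≠ σ t i)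
        = Finset.univ.image (fun t => σ t i) := by
      ext x
      simp only [Finset.mem_filter, Finset.mem_univ, true_and, Finset.mem_image, not_forall,
        not_not]
      constructor
      · rintro ⟨t, ht⟩; exact ⟨t, ht.symm⟩
      · rintro ⟨t, ht⟩; exact ⟨t, ht.symm⟩
    have hcards := Finset.card_filter_add_card_filter_not
      (s := (Finset.univ : Finset (Fin n))) (p := fun j => ∀ t : Fin k, j ≠ σ t i)
    rw [hneg, Finset.card_image_of_injective _ hinj] at hcards
    simp only [Finset.card_univ, Fintype.card_fin] at hcards
    omega
  -- column filter cardinality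
  have hcolcard : ∀ j : Fin n,
      (Finset.univ.filter (fun i => ∀ t : Fin k, j ≠ σ t i)).card = d := by
    intro j
    have hinj : Function.Injective (fun t : Fin k => (σ t).symm j) := by
      intro s t h
      simp only at h
      by_contra hst
      have h12 : σ s ((σ s).symm j) = σ t ((σ t).symm j) := by
        rw [(σ s).apply_symm_apply, (σ t).apply_symm_apply]
      rw [h] at h12
      exact hdisj ((σ t).symm j) s t hst h12
    have hneg : Finset.univ.filter (fun i => ¬ ∀ t : Fin k, j ≠ σ t i)
        = Finset.univ.image (fun t : Fin k => (σ t).symm j) := by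
      ext x
      simp only [Finset.mem_filter, Finset.mem_univ, true_and, Finset.mem_image, not_forall,
        not_not]
      constructor
      · rintro ⟨t, ht⟩
        exact ⟨t, by rw [ht]; exact ((σ t).symm_apply_apply x)⟩
      · rintro ⟨t, ht⟩
        exact ⟨t, by rw [← ht]; exact ((σ t).apply_symm_apply j).symm⟩
    have hcards := Finset.card_filter_add_card_filter_not
      (s := (Finset.univ : Finset (Fin n))) (p := fun i => ∀ t : Fin k, j ≠ σ t i)
    rw [hneg, Finset.card_image_of_injective _ hinj] at hcards
    simp only [Finset.card_univ, Fintype.card_fin] at hcards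
    omega
  -- J is doubly stochastic
  have hJrow : ∀ i, ∑ j, J i j = 1 := by
    intro i
    rw [show ∑ j, J i j = ∑ j ∈ Finset.univ.filter (fun j => ∀ t : Fin k, j ≠ σ t i),
        (d : ℝ)⁻¹ from (Finset.sum_filter _ _).symm]
    rw [Finset.sum_const, hrowcard i, nsmul_eq_mul]
    field_simp
  have hJcol : ∀ j, ∑ i, J i j = 1 := by
    intro j
    rw [show ∑ i, J i j = ∑ i ∈ Finset.univ.filter (fun i => ∀ t : Fin k, j ≠ σ t i),
        (d : ℝ)⁻¹ from (Finset.sum_filter _ _).symm]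
    rw [Finset.sum_const, hcolcard j, nsmul_eq_mul]
    field_simp
  have hJds : J ∈ doublyStochastic ℝ (Fin n) := by
    rw [mem_doublyStochastic_iff_sum]
    refine ⟨fun i j => ?_, hJrow, hJcol⟩
    rw [hJ_apply]
    split
    · positivity
    · exact le_refl 0
  have hJzero : ∀ (t : Fin k) (i : Fin n), J i (σ t i) = 0 := by
    intro t i
    rw [hJ_apply, if_neg]
    push_neg
    exact ⟨t, rfl⟩
  have hJsum : ∀ τ : Equiv.Perm (Fin n), (∀ (i : Fin n) (t : Fin k), τ i ≠ σ t i) →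
      ∑ i, J i (τ i) = n * (d : ℝ)⁻¹ := by
    intro τ hτ
    have : ∀ i : Fin n, J i (τ i) = (d : ℝ)⁻¹ := by
      intro i
      rw [hJ_apply, if_pos (fun t => hτ i t)]
    rw [Finset.sum_congr rfl fun i _ => this i, Finset.sum_const, Finset.card_univ,
      Fintype.card_fin, nsmul_eq_mul]
  have hXds : X ∈ doublyStochastic ℝ (Fin n) :=
    mem_doublyStochastic_iff_sum.2 ⟨hnonneg, hrow, hcol⟩
  -- four pairings
  have hXX : ∑ i, ∑ j, X i j * X i j = c := key_pairing σ X hXds hzero X c hconst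
  have hXJ : ∑ i, ∑ j, X i j * J i j = c := key_pairing σ J hJds hJzero X c hconst
  have hJX : ∑ i, ∑ j, J i j * X i j = n * (d : ℝ)⁻¹ :=
    key_pairing σ X hXds hzero J (n * (d : ℝ)⁻¹) hJsum
  have hJJ : ∑ i, ∑ j, J i j * J i j = n * (d : ℝ)⁻¹ :=
    key_pairing σ J hJds hJzero J (n * (d : ℝ)⁻¹) hJsum
  -- the sum of squares vanishes
  have hsq : ∑ i, ∑ j, (X i j - J i j) ^ 2 = 0 := by
    have expand : ∀ i j : Fin n, (X i j - J i j) ^ 2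
        = X i j * X i j - X i j * J i j - J i j * X i j + J i j * J i j := by
      intro i j; ring
    calc ∑ i, ∑ j, (X i j - J i j) ^ 2
        = ∑ i, ∑ j, (X i j * X i j - X i j * J i j - J i j * X i j + J i j * J i j) := by
          exact Finset.sum_congr rfl fun i _ => Finset.sum_congr rfl fun j _ => expand i j
      _ = (∑ i, ∑ j, X i j * X i j) - (∑ i, ∑ j, X i j * J i j)
          - (∑ i, ∑ j, J i j * X i j) + (∑ i, ∑ j, J i j * J i j) := by
          simp [Finset.sum_add_distrib, Finset.sum_sub_distrib]
      _ = 0 := by rw [hXX, hXJ, hJX, hJJ]; ring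
  have hterm : ∀ i ∈ (Finset.univ : Finset (Fin n)),
      ∑ j, (X i j - J i j) ^ 2 = 0 := by
    refine (Finset.sum_eq_zero_iff_of_nonneg ?_).1 hsq
    intro i _
    exact Finset.sum_nonneg fun j _ => sq_nonneg _
  have hterm2 : (X i0 j0 - J i0 j0) ^ 2 = 0 := by
    refine (Finset.sum_eq_zero_iff_of_nonneg ?_).1 (hterm i0 (Finset.mem_univ i0)) j0
      (Finset.mem_univ j0)
    intro j _
    exact sq_nonneg _
  have hXJ0 : X i0 j0 = J i0 j0 := sub_eq_zero.1 (pow_eq_zero_iff (by norm_num) |>.1 hterm2)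
  rw [hXJ0, hJ_apply, if_pos hj0]
  rw [show ((n : ℝ) - (k : ℝ)) = (d : ℝ) by rw [hd, Nat.cast_sub hkn.le]]
  rw [one_div]
end

section
/- Let X, Y be n×n doubly stochastic matrices, let Z_X ⊆ ξ(X) and Z_Y ⊆ ξ(Y) be sets of positions, and let α, β be real numbers. Assume that every permutation σ of {1,…,n} whose diagonal is disjoint from Z_X satisfies ∑_{i=1}^n x_{i,σ(i)} = α, and every permutation τ whose diagonal is disjoint from Z_Y satisfies ∑_{i=1}^n y_{i,τ(i)} = β. Then: (i) if Z_X ⊆ Z_Y, then α ≤ β; (ii) if Z_X = Z_Y, then α = β and X = Y. -/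
open Finset

lemma achilles_key {n : ℕ} (X W : Matrix (Fin n) (Fin n) ℝ)
    (hW : W ∈ doublyStochastic ℝ (Fin n))
    (ZX : Set (Fin n × Fin n))
    (hWZ : ∀ p ∈ ZX, W p.1 p.2 = 0)
    (α : ℝ)
    (hXconst : ∀ σ : Equiv.Perm (Fin n), (∀ i, (i, σ i) ∉ ZX) → ∑ i, X i (σ i) = α) :
    ∑ i, ∑ j, X i j * W i j = α := by
  obtain ⟨w, hw0, hw1, hwM⟩ := exists_eq_sum_perm_of_mem_doublyStochastic hW
  have hWentry : ∀ i j, W i j = ∑ σ : Equiv.Perm (Fin n), w σ * (if σ i = j then 1 else 0) := by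
    intro i j
    rw [← hwM]
    simp [Matrix.sum_apply, Equiv.Perm.permMatrix, PEquiv.toMatrix_apply,
      Equiv.toPEquiv_apply, eq_comm]
  have hswap : ∑ i, ∑ j, X i j * W i j = ∑ σ : Equiv.Perm (Fin n), w σ * ∑ i, X i (σ i) := by
    simp_rw [hWentry, mul_sum, ← sum_comm (s := Finset.univ (α := Equiv.Perm (Fin n)))]
    congr 1; ext σ
    simp [mul_ite, Finset.mul_sum, Finset.sum_ite_eq, mul_comm, mul_left_comm]
  rw [hswap]
  have : ∀ σ : Equiv.Perm (Fin n), w σ * ∑ i, X i (σ i) = w σ * α := by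
    intro σ
    rcases eq_or_lt_of_le (hw0 σ) with h | h
    · rw [← h]; ring
    · congr 1
      apply hXconst
      intro i hmem
      have h0 : W i (σ i) = 0 := hWZ _ hmem
      have hle : w σ ≤ W i (σ i) := by
        rw [hWentry]
        have := Finset.single_le_sum (f := fun τ : Equiv.Perm (Fin n) =>
          w τ * (if τ i = σ i then 1 else 0))
          (fun τ _ => mul_nonneg (hw0 τ) (by split <;> norm_num))
          (Finset.mem_univ σ)
        simpa using this
      linarith
  simp_rw [this, ← sum_mul, hw1, one_mul]

/-- Achilles' theorem: comparing two doubly stochastic matrices with constant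
diagonal sums avoiding prescribed zero sets. -/
theorem achilles {n : ℕ} (X Y : Matrix (Fin n) (Fin n) ℝ)
    (hXnonneg : ∀ i j, 0 ≤ X i j)
    (hXrow : ∀ i, ∑ j, X i j = 1)
    (hXcol : ∀ j, ∑ i, X i j = 1)
    (hYnonneg : ∀ i j, 0 ≤ Y i j)
    (hYrow : ∀ i, ∑ j, Y i j = 1)
    (hYcol : ∀ j, ∑ i, Y i j = 1)
    (ZX ZY : Set (Fin n × Fin n))
    (hZX : ∀ p ∈ ZX, X p.1 p.2 = 0)
    (hZY : ∀ p ∈ ZY, Y p.1 p.2 = 0)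
    (α β : ℝ)
    (hXconst : ∀ σ : Equiv.Perm (Fin n), (∀ i, (i, σ i) ∉ ZX) → ∑ i, X i (σ i) = α)
    (hYconst : ∀ τ : Equiv.Perm (Fin n), (∀ i, (i, τ i) ∉ ZY) → ∑ i, Y i (τ i) = β) :
    (ZX ⊆ ZY → α ≤ β) ∧ (ZX = ZY → α = β ∧ X = Y) := by
  have hXds : X ∈ doublyStochastic ℝ (Fin n) :=
    mem_doublyStochastic_iff_sum.2 ⟨hXnonneg, hXrow, hXcol⟩
  have hYds : Y ∈ doublyStochastic ℝ (Fin n) :=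
    mem_doublyStochastic_iff_sum.2 ⟨hYnonneg, hYrow, hYcol⟩
  have hXX : ∑ i, ∑ j, X i j * X i j = α :=
    achilles_key X X hXds ZX (fun p hp => hZX p hp) α hXconst
  have hYY : ∑ i, ∑ j, Y i j * Y i j = β :=
    achilles_key Y Y hYds ZY (fun p hp => hZY p hp) β hYconst
  have hα0 : 0 ≤ α := by
    rw [← hXX]
    exact Finset.sum_nonneg fun i _ => Finset.sum_nonneg fun j _ => mul_self_nonneg _
  have hβ0 : 0 ≤ β := by
    rw [← hYY]
    exact Finset.sum_nonneg fun i _ => Finset.sum_nonneg fun j _ => mul_self_nonneg _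
  constructor
  · intro hsub
    have hXY : ∑ i, ∑ j, X i j * Y i j = α :=
      achilles_key X Y hYds ZX (fun p hp => hZY p (hsub hp)) α hXconst
    have hcs := Finset.sum_mul_sq_le_sq_mul_sq Finset.univ
      (fun p : Fin n × Fin n => X p.1 p.2) (fun p : Fin n × Fin n => Y p.1 p.2)
    simp only [Fintype.sum_prod_type] at hcs
    rw [show (∑ i, ∑ j, X i j ^ 2) = ∑ i, ∑ j, X i j * X i j by simp [sq],
      show (∑ i, ∑ j, Y i j ^ 2) = ∑ i, ∑ j, Y i j * Y i j by simp [sq],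
      show (∑ i, ∑ j, X i j * Y i j) = α from hXY, hXX, hYY] at hcs
    rcases eq_or_lt_of_le hα0 with h | h
    · linarith
    · nlinarith
  · intro heq
    subst heq
    have hXY : ∑ i, ∑ j, X i j * Y i j = α :=
      achilles_key X Y hYds ZX (fun p hp => hZY p hp) α hXconst
    have hYX : ∑ i, ∑ j, Y i j * X i j = β :=
      achilles_key Y X hXds ZX (fun p hp => hZX p hp) β hYconst
    have hab : α = β := by
      rw [← hXY, ← hYX]
      congr 1; ext i; congr 1; ext j; ring
    refine ⟨hab, ?_⟩
    have hzero : ∑ i, ∑ j, (X i j - Y i j)^2 = 0 := by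
      have expand : ∀ i j, (X i j - Y i j)^2
          = X i j * X i j - 2 * (X i j * Y i j) + Y i j * Y i j := by
        intros; ring
      simp_rw [expand, Finset.sum_add_distrib, Finset.sum_sub_distrib, ← Finset.mul_sum]
      rw [hXX, hXY, hYY, hab]; ring
    ext i j
    have h1 := (Finset.sum_eq_zero_iff_of_nonneg
      (fun i (_ : i ∈ Finset.univ) => Finset.sum_nonneg fun j _ => sq_nonneg _)).1 hzero
      i (Finset.mem_univ i)
    have h2 := (Finset.sum_eq_zero_iff_of_nonneg
      (fun j (_ : j ∈ Finset.univ) => sq_nonneg _)).1 h1 j (Finset.mem_univ j)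
    have := sq_eq_zero_iff.1 h2
    linarith [this]
end

section
/- Let V be a real inner product space, let X and Y be finite subsets of V, and let u and v be convex combinations of the elements of X and of Y respectively (u = ∑_{x∈X} c_x x with c_x ≥ 0 and ∑_{x∈X} c_x = 1, and v = ∑_{y∈Y} c_y y with c_y ≥ 0 and ∑_{y∈Y} c_y = 1). Let a, b be real numbers such that ⟨u, x⟩ = a for all x ∈ X and ⟨v, y⟩ = b for all y ∈ Y. If Y ⊆ X, then a ≤ b. If Y = X, then a = b and u = v. -/
open scoped RealInnerProductSpace

/-- Lemma on convex combinations in an inner product space: if `u` resp. `v` are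
convex combinations of the finite sets `X` resp. `Y`, with `⟪u, x⟫ = a` for all
`x ∈ X` and `⟪v, y⟫ = b` for all `y ∈ Y`, then `Y ⊆ X` implies `a ≤ b`, and
`Y = X` implies `a = b` and `u = v`. -/
theorem convex_comb_inner {V : Type*} [NormedAddCommGroup V] [InnerProductSpace ℝ V]
    (X Y : Finset V) (cX cY : V → ℝ) (u v : V) (a b : ℝ)
    (hcX : ∀ x ∈ X, 0 ≤ cX x) (hcXsum : ∑ x ∈ X, cX x = 1)
    (hu : u = ∑ x ∈ X, cX x • x)
    (hcY : ∀ y ∈ Y, 0 ≤ cY y) (hcYsum : ∑ y ∈ Y, cY y = 1)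
    (hv : v = ∑ y ∈ Y, cY y • y)
    (ha : ∀ x ∈ X, ⟪u, x⟫ = a) (hb : ∀ y ∈ Y, ⟪v, y⟫ = b) :
    (Y ⊆ X → a ≤ b) ∧ (Y = X → a = b ∧ u = v) := by
  have key : ∀ (w : V) (Z : Finset V) (c : V → ℝ) (r : ℝ), (∑ z ∈ Z, c z = 1) →
      (∀ z ∈ Z, ⟪w, z⟫ = r) → ⟪w, ∑ z ∈ Z, c z • z⟫ = r := by
    intro w Z c r hsum hr
    rw [inner_sum]
    calc ∑ z ∈ Z, ⟪w, c z • z⟫ = ∑ z ∈ Z, c z * r := by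
          refine Finset.sum_congr rfl fun z hz => ?_
          rw [real_inner_smul_right, hr z hz]
      _ = r := by rw [← Finset.sum_mul, hsum, one_mul]
  have huu : ⟪u, u⟫ = a := by nth_rewrite 2 [hu]; exact key u X cX a hcXsum ha
  have hvv : ⟪v, v⟫ = b := by nth_rewrite 2 [hv]; exact key v Y cY b hcYsum hb
  have main : Y ⊆ X → a ≤ b := by
    intro hYX
    have huv : ⟪u, v⟫ = a := by
      rw [hv]; exact key u Y cY a hcYsum fun y hy => ha y (hYX hy)
    have h0 : (0:ℝ) ≤ ⟪u - v, u - v⟫ := real_inner_self_nonneg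
    rw [inner_sub_sub_self, huu, hvv, huv] at h0
    have hvu' : ⟪v, u⟫ = a := by rw [real_inner_comm]; exact huv
    linarith [hvu']
  refine ⟨main, fun hYX => ?_⟩
  subst hYX
  have huv : ⟪u, v⟫ = a := by
    rw [hv]; exact key u Y cY a hcYsum fun y hy => ha y hy
  have hvu : ⟪v, u⟫ = b := by
    rw [hu]; exact key v Y cX b hcXsum fun x hx => hb x hx
  have hab : a = b := by rw [← huv, real_inner_comm, hvu]
  refine ⟨hab, ?_⟩
  have h0 : ⟪u - v, u - v⟫ = 0 := by
    rw [inner_sub_sub_self, huu, hvv, huv]; linarith [hvu, hab]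
  have := inner_self_eq_zero.mp h0
  exact sub_eq_zero.mp this
end

section
/- Let A = [a_ij] be an n×n (0,1)-matrix and let u = (u_1,…,u_n), v = (v_1,…,v_n) be real vectors. Define the n×n matrix Y = [y_ij] by y_ij = u_i + v_j whenever a_ij = 1 and y_ij = 0 otherwise. Assume that u_i + v_j > 0 whenever a_ij = 1 and that all row sums and all column sums of Y equal some positive number α. Then X = (1/α)Y is a doubly stochastic matrix with ξ(X) = ξ(A), and all diagonal sums of X over permutations σ with x_{i,σ(i)} > 0 for all i are equal; that is, X is an RCDS doubly stochastic matrix with pattern A. -/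
/-- `X` is doubly stochastic: nonnegative entries and all row and column sums equal 1. -/
def DoublyStochastic {n : ℕ} (X : Matrix (Fin n) (Fin n) ℝ) : Prop :=
  (∀ i j, 0 ≤ X i j) ∧ (∀ i, ∑ j, X i j = 1) ∧ (∀ j, ∑ i, X i j = 1)

/-- `X` has restricted constant diagonal sums: all diagonal sums over permutations
avoiding the zeros of `X` are equal. -/
def RCDS {n : ℕ} (X : Matrix (Fin n) (Fin n) ℝ) : Prop :=
  ∀ σ τ : Equiv.Perm (Fin n), (∀ i, 0 < X i (σ i)) → (∀ i, 0 < X i (τ i)) →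
    ∑ i, X i (σ i) = ∑ i, X i (τ i)

/-- Sufficiency part of the RCDS characterization: if `Y i j = u i + v j` on the
support of the (0,1)-matrix `A` (and 0 elsewhere), all such values are positive,
and all line sums of `Y` equal `α > 0`, then `X = (1/α) Y` is an RCDS doubly
stochastic matrix with pattern `A`. -/
theorem rcds_char_sufficiency {n : ℕ} (A : Matrix (Fin n) (Fin n) ℝ)
    (hA01 : ∀ i j, A i j = 0 ∨ A i j = 1)
    (u v : Fin n → ℝ) (α : ℝ) (hα : 0 < α)
    (Y : Matrix (Fin n) (Fin n) ℝ)
    (hY : ∀ i j, Y i j = if A i j = 1 then u i + v j else 0)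
    (hpos : ∀ i j, A i j = 1 → 0 < u i + v j)
    (hrow : ∀ i, ∑ j, Y i j = α)
    (hcol : ∀ j, ∑ i, Y i j = α) :
    DoublyStochastic (α⁻¹ • Y) ∧ (∀ i j, (α⁻¹ • Y) i j = 0 ↔ A i j = 0) ∧
      RCDS (α⁻¹ • Y) := by
  have hYnn : ∀ i j, 0 ≤ Y i j := by
    intro i j
    rw [hY]
    split
    · exact le_of_lt (hpos i j ‹_›)
    · exact le_rfl
  have hYpos : ∀ i j, 0 < Y i j ↔ A i j = 1 := by
    intro i j
    rw [hY]
    rcases hA01 i j with h | h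
    · simp [h]
    · simp [h, hpos i j h]
  refine ⟨⟨fun i j => ?_, fun i => ?_, fun j => ?_⟩, fun i j => ?_, fun σ τ hσ hτ => ?_⟩
  · exact mul_nonneg (le_of_lt (inv_pos.mpr hα)) (hYnn i j)
  · simp only [Matrix.smul_apply, smul_eq_mul, ← Finset.mul_sum, hrow]
    field_simp
  · simp only [Matrix.smul_apply, smul_eq_mul, ← Finset.mul_sum, hcol]
    field_simp
  · simp only [Matrix.smul_apply, smul_eq_mul]
    rcases hA01 i j with h | h
    · simp [h, hY i j, show (0:ℝ) ≠ 1 from by norm_num]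
    · have := (hYpos i j).mpr h
      constructor
      · intro hz
        exfalso
        have : α⁻¹ * Y i j > 0 := mul_pos (inv_pos.mpr hα) this
        linarith [hz ▸ this]
      · intro hz; rw [h] at hz; norm_num at hz
  · have key : ∀ ρ : Equiv.Perm (Fin n), (∀ i, 0 < (α⁻¹ • Y) i (ρ i)) →
        ∑ i, (α⁻¹ • Y) i (ρ i) = α⁻¹ * (∑ i, u i + ∑ i, v i) := by
      intro ρ hρ
      have : ∀ i, (α⁻¹ • Y) i (ρ i) = α⁻¹ * (u i + v (ρ i)) := by
        intro i
        have h1 : 0 < Y i (ρ i) := by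
          have := hρ i
          simp only [Matrix.smul_apply, smul_eq_mul] at this
          nlinarith [inv_pos.mpr hα]
        have hA := (hYpos i (ρ i)).mp h1
        simp [Matrix.smul_apply, hY, hA]
      rw [Finset.sum_congr rfl (fun i _ => this i), ← Finset.mul_sum]
      congr 1
      rw [Finset.sum_add_distrib]
      congr 1
      exact Equiv.sum_comp ρ v
    rw [key σ hσ, key τ hτ]
end

section
/- Let A = [a_ij] be an n×n fully indecomposable (0,1)-matrix and let X = [x_ij] be an RCDS doubly stochastic matrix with ξ(X) = ξ(A). Then there exist real vectors u = (u_1,…,u_n) and v = (v_1,…,v_n) such that x_ij = u_i + v_j for all positions (i,j) with a_ij = 1. -/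
/-- `A` is fully indecomposable: there are no nonempty `I, J ⊆ {1,…,n}` with
`|I| + |J| = n` and `A i j = 0` for all `i ∈ I`, `j ∈ J`. -/
def FullyIndecomposable {n : ℕ} (A : Matrix (Fin n) (Fin n) ℝ) : Prop :=
  ¬ ∃ (I J : Finset (Fin n)), I.Nonempty ∧ J.Nonempty ∧ I.card + J.card = n ∧
      ∀ i ∈ I, ∀ j ∈ J, A i j = 0

open Equiv List Relation

section Walks

variable {α M : Type*} [AddCommGroup M] (y : α → α → M)

def walkWeight : List α → M
  | a :: b :: l => y a b + walkWeight (b :: l)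
  | _ => 0

@[simp] lemma walkWeight_nil : walkWeight y [] = 0 := rfl

@[simp] lemma walkWeight_singleton (a : α) : walkWeight y [a] = 0 := rfl

@[simp] lemma walkWeight_cons_cons (a b : α) (l : List α) :
    walkWeight y (a :: b :: l) = y a b + walkWeight y (b :: l) := rfl

lemma walkWeight_append_cons (l₁ : List α) (c : α) (l₂ : List α) :
    walkWeight y (l₁ ++ c :: l₂) = walkWeight y (l₁ ++ [c]) + walkWeight y (c :: l₂) := by
  induction l₁ with
  | nil => simp
  | cons a t ih => cases t <;> simp_all [add_assoc]

lemma walkWeight_eq_sum_zipWith (l : List α) :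
    walkWeight y l = (zipWith y l.dropLast l.tail).sum := by
  induction l using List.twoStepInduction with
  | nil | singleton => simp
  | cons_cons a b t _ ih => simp [ih]

end Walks

lemma List.map_formPerm_cons {α : Type*} [DecidableEq α] {a : α} {l : List α}
    (h : (a :: l).Nodup) : (a :: l).map (formPerm (a :: l)) = l ++ [a] := by
  calc (a :: l).map (formPerm (a :: l)) = (a :: l).rotate 1 :=
        List.ext_getElem (by simp) fun i _ _ => by
          rw [getElem_map, formPerm_apply_getElem _ h, getElem_rotate]
    _ = l ++ [a] := by simp

lemma List.Duplicate.exists_eq_append_cons_append_cons {α : Type*} {x : α} {l : List α}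
    (h : l.Duplicate x) : ∃ p q r, l = p ++ x :: q ++ x :: r := by
  induction h with
  | cons_mem hx =>
    obtain ⟨q, r, rfl⟩ := List.append_of_mem hx
    exact ⟨[], q, r, rfl⟩
  | cons_duplicate _ ih =>
    obtain ⟨p, q, r, rfl⟩ := ih
    exact ⟨_ :: p, q, r, rfl⟩

section Cycles

variable {α M : Type*} [AddCommGroup M] {E : α → α → Prop} (y : α → α → M)

lemma isChain_concat_head_iff [DecidableEq α] {a : α} {l : List α} (h : (a :: l).Nodup) :
    IsChain E (a :: l ++ [a]) ↔ ∀ x ∈ a :: l, E x (formPerm (a :: l) x) := by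
  rw [isChain_iff_forall₂, dropLast_concat, cons_append, tail_cons, ← map_formPerm_cons h,
    forall₂_map_right_iff, forall₂_same]

lemma sum_formPerm_eq_walkWeight [DecidableEq α] [Fintype α] (hy : ∀ x, y x x = 0) {a : α}
    {l : List α} (h : (a :: l).Nodup) :
    ∑ x, y x (formPerm (a :: l) x) = walkWeight y (a :: l ++ [a]) := by
  rw [walkWeight_eq_sum_zipWith, dropLast_concat, cons_append, tail_cons, ← map_formPerm_cons h,
    zipWith_map_right, zipWith_self, ← List.sum_toFinset _ h]
  refine (Finset.sum_subset (Finset.subset_univ _) fun x _ hx => ?_).symm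
  rw [formPerm_apply_of_notMem (by simpa using hx), hy]

theorem walkWeight_eq_zero_of_head?_eq_getLast? [Fintype α] (hE : ∀ a, E a a)
    (hy : ∀ a, y a a = 0) (hperm : ∀ τ : Perm α, (∀ a, E a (τ a)) → ∑ a, y a (τ a) = 0)
    {w : List α} (hw : IsChain E w) (hclosed : w.head? = w.getLast?) :
    walkWeight y w = 0 := by
  classical
  induction hlen : w.length using Nat.strong_induction_on generalizing w with
  | _ k ih =>
  subst hlen
  rcases w with _ | ⟨a, l⟩
  · rfl
  rcases l.eq_nil_or_concat' with rfl | ⟨l, b, rfl⟩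
  · rfl
  obtain rfl : a = b := by
    rw [← cons_append, getLast?_concat] at hclosed
    simpa using hclosed
  by_cases hnd : (a :: l).Nodup
  · rw [← cons_append, ← sum_formPerm_eq_walkWeight y hy hnd]
    refine hperm _ fun x => ?_
    by_cases hx : x ∈ a :: l
    · exact (isChain_concat_head_iff hnd).1 hw x hx
    · rw [formPerm_apply_of_notMem hx]
      exact hE x
  -- A repeated vertex `x` splits the walk into a loop at `x` and a shorter closed walk.
  obtain ⟨x, hx⟩ := exists_duplicate_iff_not_nodup.2 hnd
  obtain ⟨p, q, r, hpqr⟩ := hx.exists_eq_append_cons_append_cons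
  have hsplit : a :: (l ++ [a]) = p ++ x :: (q ++ x :: (r ++ [a])) := by
    rw [← cons_append, hpqr]; simp
  have hlen : l.length + 1 = p.length + q.length + r.length + 2 := by
    simpa [add_assoc] using congrArg length hpqr
  rw [hsplit] at hw hclosed ⊢
  obtain ⟨hp, hqr⟩ := isChain_split.1 hw
  rw [← cons_append, isChain_split] at hqr
  obtain ⟨hq, hr⟩ := hqr
  have hloop : walkWeight y (x :: q ++ [x]) = 0 :=
    ih _ (by simp; omega) hq (by rw [getLast?_concat]; rfl) rfl
  have hrest : walkWeight y (p ++ x :: (r ++ [a])) = 0 := by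
    refine ih _ (by simp; omega) (isChain_split.2 ⟨hp, hr⟩) ?_ rfl
    simp only [← cons_append, ← append_assoc, getLast?_concat, head?_append] at hclosed ⊢
    simpa using hclosed
  rw [walkWeight_append_cons y p x, ← cons_append (a := x) (as := q),
    walkWeight_append_cons y (x :: q) x, hloop, zero_add, ← walkWeight_append_cons, hrest]

theorem exists_potential_of_walkWeight_eq_zero (hconn : ∀ a b, ReflTransGen E a b)
    (hclosed : ∀ w : List α, IsChain E w → w.head? = w.getLast? → walkWeight y w = 0) :
    ∃ p : α → M, ∀ a b, E a b → y a b = p b - p a := by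
  rcases isEmpty_or_nonempty α with hα | ⟨⟨a₀⟩⟩
  · exact ⟨0, fun a => isEmptyElim a⟩
  have hto : ∀ b, ∃ u, IsChain E (u ++ [b]) ∧ (u ++ [b]).head? = some a₀ := fun b => by
    obtain ⟨l, hl, rfl⟩ := exists_isChain_cons_of_relationReflTransGen (hconn a₀ b)
    refine ⟨(a₀ :: l).dropLast, ?_, ?_⟩ <;> rw [dropLast_append_getLast]
    exacts [hl, rfl]
  choose u hu using hto
  have hround : ∀ a l, IsChain E (a :: l) → (a :: l).getLast? = some a₀ →
      walkWeight y (u a ++ [a]) + walkWeight y (a :: l) = 0 := by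
    intro a l hl hlast
    rw [← walkWeight_append_cons]
    refine hclosed _ (isChain_split.2 ⟨(hu a).1, hl⟩) ?_
    rw [getLast?_append, hlast, ← (hu a).2]
    simp [head?_append]
  refine ⟨fun b => walkWeight y (u b ++ [b]), fun a b hab => ?_⟩
  obtain ⟨v, hv, hvlast⟩ := exists_isChain_cons_of_relationReflTransGen (hconn b a₀)
  replace hvlast : (b :: v).getLast? = some a₀ := by
    rw [← hvlast]; exact getLast?_eq_some_getLast _
  have h₁ := hround b v hv hvlast
  have h₂ := hround a (b :: v) (hv.cons_cons hab) (by rwa [getLast?_cons_cons])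
  rw [walkWeight_cons_cons] at h₂
  linear_combination (norm := abel) h₂ - h₁

end Cycles

theorem exists_perm_forall_pos_of_mem_doublyStochastic {R n : Type*} [Fintype n] [DecidableEq n]
    [Field R] [LinearOrder R] [IsStrictOrderedRing R] {M : Matrix n n R}
    (hM : M ∈ doublyStochastic R n) : ∃ σ : Perm n, ∀ i, 0 < M i (σ i) := by
  obtain ⟨w, hw₀, hw₁, rfl⟩ := exists_eq_sum_perm_of_mem_doublyStochastic hM
  obtain ⟨σ, -, hσ⟩ := Finset.exists_lt_of_sum_lt (s := Finset.univ) (f := 0) (g := w)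
    (by simp [hw₁])
  refine ⟨σ, fun i => hσ.trans_le ?_⟩
  calc w σ = (w σ • σ.permMatrix R) i (σ i) := by simp [Equiv.toPEquiv_apply]
    _ ≤ ∑ τ, (w τ • τ.permMatrix R) i (σ i) :=
      Finset.single_le_sum (f := fun τ => (w τ • τ.permMatrix R) i (σ i))
        (fun τ _ => by simpa [Equiv.toPEquiv_apply] using ite_nonneg (hw₀ τ) le_rfl)
        (Finset.mem_univ σ)
    _ = _ := by simp [Matrix.sum_apply]

theorem FullyIndecomposable.reflTransGen {n : ℕ} {A : Matrix (Fin n) (Fin n) ℝ}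
    (hA : FullyIndecomposable A) (σ : Perm (Fin n)) (a b : Fin n) :
    ReflTransGen (fun i j => A i (σ j) ≠ 0) a b := by
  classical
  by_contra hab
  set K := Finset.univ.filter (ReflTransGen (fun i j => A i (σ j) ≠ 0) a)
  refine hA ⟨K, Kᶜ.map σ.toEmbedding, ⟨a, by simp [K, ReflTransGen.refl]⟩,
    ⟨σ b, by simpa [K] using hab⟩, ?_, ?_⟩
  · rw [Finset.card_map, Finset.card_compl]
    exact (Nat.add_sub_cancel' (Finset.card_le_univ K)).trans (Fintype.card_fin n)
  · intro i hi j hj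
    obtain ⟨c, hc, rfl⟩ := Finset.mem_map.1 hj
    by_contra h
    simp only [K, Finset.mem_compl, Finset.mem_filter_univ] at hi hc
    exact hc (hi.tail h)

theorem rcds_char_necessity_general {n : ℕ} (A X : Matrix (Fin n) (Fin n) ℝ)
    (hFI : FullyIndecomposable A)
    (hDS : DoublyStochastic X)
    (hRCDS : RCDS X)
    (hpattern : ∀ i j, X i j = 0 ↔ A i j = 0) :
    ∃ u v : Fin n → ℝ, ∀ i j, A i j = 1 → X i j = u i + v j := by
  obtain ⟨σ, hσ⟩ :=
    exists_perm_forall_pos_of_mem_doublyStochastic (mem_doublyStochastic_iff_sum.2 hDS)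
  have hpos : ∀ i j, A i j ≠ 0 → 0 < X i j := fun i j h =>
    (hDS.1 i j).lt_of_ne' (mt (hpattern i j).1 h)
  set y : Fin n → Fin n → ℝ := fun i j => X i (σ j) - X i (σ i)
  have hperm : ∀ τ : Perm (Fin n), (∀ i, A i (σ (τ i)) ≠ 0) → ∑ i, y i (τ i) = 0 :=
    fun τ hτ => by
      rw [Finset.sum_sub_distrib, sub_eq_zero]
      exact hRCDS (τ.trans σ) σ (fun i => hpos _ _ (hτ i)) hσ
  obtain ⟨p, hp⟩ := exists_potential_of_walkWeight_eq_zero y (hFI.reflTransGen σ)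
    fun w => walkWeight_eq_zero_of_head?_eq_getLast? y (fun i => mt (hpattern _ _).2 (hσ i).ne')
      (fun _ => sub_self _) hperm
  refine ⟨fun i => X i (σ i) - p i, fun j => p (σ.symm j), fun i j hij => ?_⟩
  have := hp i (σ.symm j) (by simp [hij])
  simp only [y, apply_symm_apply] at this
  linarith

/-- Necessity part of the RCDS characterization: if `A` is fully indecomposable
and `X` is an RCDS doubly stochastic matrix with pattern `A`, then there are
vectors `u, v` with `X i j = u i + v j` wherever `A i j = 1`. -/
theorem rcds_char_necessity {n : ℕ} (A X : Matrix (Fin n) (Fin n) ℝ)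
    (hA01 : ∀ i j, A i j = 0 ∨ A i j = 1)
    (hFI : FullyIndecomposable A)
    (hDS : DoublyStochastic X)
    (hRCDS : RCDS X)
    (hpattern : ∀ i j, X i j = 0 ↔ A i j = 0) :
    ∃ u v : Fin n → ℝ, ∀ i j, A i j = 1 → X i j = u i + v j :=
  rcds_char_necessity_general A X hFI hDS hRCDS hpattern
end

section
/- Let k, t, p ≥ 1 be integers with t ≤ k, and let n = kp. Then: (a) there exists an (n−k)×n (0,1)-matrix A all of whose row sums equal tp and all of whose column sums equal t(p−1); and (b) for any such A, the n×n matrix V = (1/(tp)) · [B; A], where B is the k×n matrix consisting of p copies of t·I_k placed side by side (so the first k rows of tp·V are [tI_k tI_k ⋯ tI_k]) and the last n−k rows of tp·V equal A, is an RCDS doubly stochastic matrix. -/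
open Finset

theorem Fin.sum_univ_mod_eq_nsmul {M : Type*} [AddCommMonoid M] {n k q : ℕ} (hn : n = q * k)
    (g : ℕ → M) : ∑ j : Fin n, g (j % k) = q • ∑ b : Fin k, g b := by
  subst hn
  rw [← finProdFinEquiv.sum_comp, Fintype.sum_prod_type]
  simp [finProdFinEquiv, Nat.add_mul_mod_self_left, Nat.mod_eq_of_lt]

open Fin.NatCast in
theorem Fin.sum_univ_add_mod {M : Type*} [AddCommMonoid M] {k : ℕ} [NeZero k] (g : ℕ → M)
    (c : ℕ) : ∑ b : Fin k, g ((b + c) % k) = ∑ b : Fin k, g b :=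
  Fintype.sum_equiv (Equiv.addRight (c : Fin k)) _ _ fun b => by simp [Fin.val_add]

theorem Fin.card_filter_add_mod_lt {n k q t : ℕ} [NeZero k] (hn : n = q * k) (htk : t ≤ k)
    (c : ℕ) : #{j : Fin n | ((j : ℕ) + c) % k < t} = q * t := by
  rw [card_filter]
  have hg : ∀ j : Fin n, ((j : ℕ) + c) % k = ((j : ℕ) % k + c) % k := fun j => by
    rw [Nat.mod_add_mod]
  simp only [hg]
  rw [Fin.sum_univ_mod_eq_nsmul hn (fun y => if (y + c) % k < t then 1 else 0),
    Fin.sum_univ_add_mod (fun y => if y < t then 1 else 0) c]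
  simp only [← card_filter]
  rw [Fin.card_filter_val_lt, min_eq_right htk, smul_eq_mul]

theorem Fin.card_filter_mod_eq {n k q i : ℕ} (hn : n = q * k) (hi : i < k) :
    #{j : Fin n | (j : ℕ) % k = i} = q := by
  rw [card_filter, Fin.sum_univ_mod_eq_nsmul hn (fun y => if y = i then 1 else 0)]
  have hsingle : ({b : Fin k | (b : ℕ) = i} : Finset (Fin k)) = {⟨i, hi⟩} := by
    ext b; simp [Fin.ext_iff]
  simp [hsingle]

theorem Fin.lt_or_exists_eq_add {n : ℕ} (k : ℕ) (i : Fin n) :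
    (i : ℕ) < k ∨ ∃ i' : Fin (n - k), i = ⟨k + i', by have := i'.isLt; omega⟩ := by
  by_cases hi : (i : ℕ) < k
  · exact Or.inl hi
  · exact Or.inr ⟨⟨i - k, by omega⟩, Fin.ext (by simp; omega)⟩

theorem Fin.sum_univ_eq_sum_castLE_add {M : Type*} [AddCommMonoid M] {n k : ℕ} (hk : k ≤ n)
    (f : Fin n → M) :
    ∑ i, f i = ∑ i : Fin k, f (Fin.castLE hk i) +
      ∑ i : Fin (n - k), f ⟨k + i, by have := i.isLt; omega⟩ := by
  rw [← ((finSumFinEquiv).trans (finCongr (Nat.add_sub_cancel' hk))).sum_comp,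
    Fintype.sum_sum_type]
  rfl

theorem DoublyStochastic.of_smul {n : ℕ} {X : Matrix (Fin n) (Fin n) ℝ} {c : ℝ} (hc : 0 < c)
    (hnonneg : ∀ i j, 0 ≤ (c • X) i j) (hrow : ∀ i, ∑ j, (c • X) i j = c)
    (hcol : ∀ j, ∑ i, (c • X) i j = c) : DoublyStochastic X := by
  simp only [Matrix.smul_apply, smul_eq_mul, ← mul_sum, mul_eq_left₀ hc.ne']
    at hnonneg hrow hcol
  exact ⟨fun i j => (mul_nonneg_iff_of_pos_left hc).mp (hnonneg i j), hrow, hcol⟩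

theorem RCDS.of_smul {n : ℕ} {X : Matrix (Fin n) (Fin n) ℝ} {c : ℝ} (hc : 0 < c)
    (h : RCDS (c • X)) : RCDS X := by
  intro σ τ hσ hτ
  have := h σ τ (fun i => mul_pos hc (hσ i)) (fun i => mul_pos hc (hτ i))
  simpa only [Matrix.smul_apply, smul_eq_mul, ← mul_sum, mul_right_inj' hc.ne'] using this

theorem RCDS.of_forall_pos_eq {n : ℕ} {X : Matrix (Fin n) (Fin n) ℝ} (r : Fin n → ℝ)
    (h : ∀ i j, 0 < X i j → X i j = r i) : RCDS X := fun σ τ hσ hτ => by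
  rw [sum_congr rfl fun i _ => h i _ (hσ i), sum_congr rfl fun i _ => h i _ (hτ i)]

def periodicBand (m n k t : ℕ) : Matrix (Fin m) (Fin n) ℝ :=
  Matrix.of fun i j => if ((i : ℕ) + j) % k < t then 1 else 0

section periodicBand

variable {m n k t q : ℕ}

theorem periodicBand_eq_zero_or_one (i : Fin m) (j : Fin n) :
    periodicBand m n k t i j = 0 ∨ periodicBand m n k t i j = 1 := by
  simp only [periodicBand, Matrix.of_apply]
  split_ifs <;> simp

theorem periodicBand_row_sum [NeZero k] (hn : n = q * k) (htk : t ≤ k) (i : Fin m) :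
    ∑ j, periodicBand m n k t i j = q * t := by
  simp only [periodicBand, Matrix.of_apply, add_comm (i : ℕ)]
  rw [← sum_filter, sum_const, Fin.card_filter_add_mod_lt hn htk, nsmul_one, Nat.cast_mul]

theorem periodicBand_col_sum [NeZero k] (hm : m = q * k) (htk : t ≤ k) (j : Fin n) :
    ∑ i, periodicBand m n k t i j = q * t := by
  simp only [periodicBand, Matrix.of_apply]
  rw [← sum_filter, sum_const, Fin.card_filter_add_mod_lt hm htk, nsmul_one, Nat.cast_mul]

end periodicBand

/-- `W = [t I_k ⋯ t I_k ; A]`, the matrix `tp • V` of part (b). -/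
structure IsBlockStack {n : ℕ} (k t : ℕ) (A : Matrix (Fin (n - k)) (Fin n) ℝ)
    (W : Matrix (Fin n) (Fin n) ℝ) : Prop where
  top : ∀ i j : Fin n, (i : ℕ) < k → W i j = if (j : ℕ) % k = i then (t : ℝ) else 0
  bottom : ∀ (i : Fin (n - k)) (j : Fin n), W ⟨k + i, by have := i.isLt; omega⟩ j = A i j

namespace IsBlockStack

variable {n k t p : ℕ} {A : Matrix (Fin (n - k)) (Fin n) ℝ} {W : Matrix (Fin n) (Fin n) ℝ}

theorem nonneg (h : IsBlockStack k t A W) (hA : ∀ i j, A i j = 0 ∨ A i j = 1) (i j : Fin n) :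
    0 ≤ W i j := by
  rcases Fin.lt_or_exists_eq_add k i with hi | ⟨i, rfl⟩
  · rw [h.top i j hi]; split_ifs <;> positivity
  · rw [h.bottom]; rcases hA i j with hA | hA <;> simp [hA]

theorem eq_of_pos (h : IsBlockStack k t A W) (hA : ∀ i j, A i j = 0 ∨ A i j = 1) (i j : Fin n)
    (hpos : 0 < W i j) : W i j = if (i : ℕ) < k then (t : ℝ) else 1 := by
  rcases Fin.lt_or_exists_eq_add k i with hi | ⟨i, rfl⟩
  · rw [h.top i j hi] at hpos ⊢
    rw [if_pos hi]
    split_ifs at hpos ⊢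
    · rfl
    · exact absurd hpos (lt_irrefl 0)
  · rw [h.bottom] at hpos ⊢
    rw [if_neg (by simp)]
    rcases hA i j with hA | hA
    · simp [hA] at hpos
    · exact hA

theorem row_sum (h : IsBlockStack k t A W) (hn : n = p * k)
    (hA : ∀ i, ∑ j, A i j = t * p) (i : Fin n) : ∑ j, W i j = t * p := by
  rcases Fin.lt_or_exists_eq_add k i with hi | ⟨i, rfl⟩
  · rw [sum_congr rfl fun j _ => h.top i j hi, ← sum_filter, sum_const,
      Fin.card_filter_mod_eq hn hi, nsmul_eq_mul, mul_comm]
  · simp only [h.bottom, hA]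

theorem col_sum [NeZero k] (h : IsBlockStack k t A W) (hk : k ≤ n)
    (hA : ∀ j, ∑ i, A i j = t * (p - 1)) (j : Fin n) : ∑ i, W i j = t * p := by
  have htop : ∑ i : Fin k, W (Fin.castLE hk i) j = t := by
    rw [sum_congr rfl fun i _ => by rw [h.top _ j (by simp), Fin.val_castLE],
      Fin.sum_univ_eq_sum_range (fun i => if (j : ℕ) % k = i then (t : ℝ) else 0), sum_ite_eq,
      if_pos (mem_range.2 (Nat.mod_lt _ (Nat.pos_of_neZero k)))]
  rw [Fin.sum_univ_eq_sum_castLE_add hk, htop]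
  simp only [h.bottom, hA]
  ring

end IsBlockStack

/-- For integers `1 ≤ t ≤ k`, `p ≥ 1`, `n = kp`: (a) there is an `(n-k) × n`
(0,1)-matrix `A` with all row sums `tp` and all column sums `t(p-1)`; and (b) for
any such `A`, the matrix `V = (1/(tp))·[tI_k tI_k ⋯ tI_k ; A]` is an RCDS doubly
stochastic matrix. Here the first `k` rows of `tp·V` consist of `p` copies of
`t·I_k` side by side (entry `t` in row `i < k`, column `j` iff `j % k = i`), and
the last `n-k` rows of `tp·V` equal `A`. -/
theorem rcds_class_block (k t p : ℕ) (hk : 1 ≤ k) (ht : 1 ≤ t) (hp : 1 ≤ p)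
    (htk : t ≤ k) (n : ℕ) (hn : n = k * p) :
    (∃ A : Matrix (Fin (n - k)) (Fin n) ℝ,
        (∀ i j, A i j = 0 ∨ A i j = 1) ∧
        (∀ i, ∑ j, A i j = (t : ℝ) * (p : ℝ)) ∧
        (∀ j, ∑ i, A i j = (t : ℝ) * ((p : ℝ) - 1))) ∧
    (∀ A : Matrix (Fin (n - k)) (Fin n) ℝ,
        (∀ i j, A i j = 0 ∨ A i j = 1) →
        (∀ i, ∑ j, A i j = (t : ℝ) * (p : ℝ)) →
        (∀ j, ∑ i, A i j = (t : ℝ) * ((p : ℝ) - 1)) →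
        ∀ V : Matrix (Fin n) (Fin n) ℝ,
          (∀ i j : Fin n, (i : ℕ) < k →
              V i j = (if (j : ℕ) % k = (i : ℕ) then (t : ℝ) else 0) / ((t : ℝ) * (p : ℝ))) →
          (∀ (i : Fin (n - k)) (j : Fin n),
              V ⟨k + (i : ℕ), by have := i.isLt; omega⟩ j = A i j / ((t : ℝ) * (p : ℝ))) →
          DoublyStochastic V ∧ RCDS V) := by
  have : NeZero k := ⟨by omega⟩
  have hpk : n = p * k := hn.trans (mul_comm k p)
  have hnk : n - k = (p - 1) * k := by rw [hpk, Nat.sub_one_mul]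
  refine ⟨⟨periodicBand _ _ k t, periodicBand_eq_zero_or_one, fun i => ?_, fun j => ?_⟩, ?_⟩
  · rw [periodicBand_row_sum hpk htk, mul_comm]
  · rw [periodicBand_col_sum hnk htk, Nat.cast_sub hp, Nat.cast_one, mul_comm]
  intro A hA01 hArow hAcol V hVtop hVbottom
  have hc : (0 : ℝ) < t * p := by positivity
  have hW : IsBlockStack k t A ((t * p : ℝ) • V) :=
    ⟨fun i j hi => by
      rw [Matrix.smul_apply, hVtop i j hi, smul_eq_mul, mul_div_cancel₀ _ hc.ne'],
     fun i j => by rw [Matrix.smul_apply, hVbottom i j, smul_eq_mul, mul_div_cancel₀ _ hc.ne']⟩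
  exact ⟨DoublyStochastic.of_smul hc (hW.nonneg hA01) (hW.row_sum hpk hArow)
      (hW.col_sum (hpk ▸ Nat.le_mul_of_pos_left k hp) hAcol),
    RCDS.of_smul hc (RCDS.of_forall_pos_eq _ (hW.eq_of_pos hA01))⟩
end

section
/- Let A = [a_ij] be an n×n fully indecomposable (0,1)-matrix with row sums r_1,…,r_n and column sums s_1,…,s_n, and let (u, v) ∈ ℝ^n × ℝ^n be any solution of the system r_i u_i + ∑_{j : a_ij = 1} v_j = 1 (i = 1,…,n) and s_j v_j + ∑_{i : a_ij = 1} u_i = 1 (j = 1,…,n). Then A is the pattern of an RCDS doubly stochastic matrix if and only if u_i + v_j > 0 for all (i,j) with a_ij = 1. -/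
lemma myPermMatrix_apply {n : ℕ} (σ : Equiv.Perm (Fin n)) (i j : Fin n) :
    σ.permMatrix ℝ i j = if σ i = j then 1 else 0 := by
  simp [Equiv.Perm.permMatrix, PEquiv.toMatrix_apply, Equiv.toPEquiv_apply]

lemma myDS_mem {n : ℕ} {X : Matrix (Fin n) (Fin n) ℝ} (h : DoublyStochastic X) :
    X ∈ doublyStochastic ℝ (Fin n) := by
  rw [mem_doublyStochastic_iff_sum]; exact ⟨h.1, h.2.1, h.2.2⟩

lemma entry_ge {n : ℕ} {N : Matrix (Fin n) (Fin n) ℝ} (w : Equiv.Perm (Fin n) → ℝ)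
    (hw0 : ∀ σ, 0 ≤ w σ) (hw3 : ∑ σ, w σ • σ.permMatrix ℝ = N)
    (σ : Equiv.Perm (Fin n)) (a : Fin n) : w σ ≤ N a (σ a) := by
  have : N a (σ a) = ∑ τ : Equiv.Perm (Fin n), w τ * (τ.permMatrix ℝ a (σ a)) := by
    rw [← hw3]; simp [Matrix.sum_apply]
  rw [this]
  have h1 : w σ = w σ * (σ.permMatrix ℝ a (σ a)) := by rw [myPermMatrix_apply]; simp
  rw [h1]
  refine Finset.single_le_sum (f := fun τ => w τ * (τ.permMatrix ℝ a (σ a))) ?_ (Finset.mem_univ σ)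
  intro τ _
  have : (0:ℝ) ≤ τ.permMatrix ℝ a (σ a) := by rw [myPermMatrix_apply]; positivity
  exact mul_nonneg (hw0 τ) this

lemma exists_support_perm {n : ℕ} {X : Matrix (Fin n) (Fin n) ℝ} (hX : DoublyStochastic X) :
    ∃ σ : Equiv.Perm (Fin n), ∀ a, 0 < X a (σ a) := by
  obtain ⟨w, hw0, hw1, hw3⟩ := exists_eq_sum_perm_of_mem_doublyStochastic (myDS_mem hX)
  obtain ⟨σ, hσ⟩ := Finset.exists_ne_zero_of_sum_ne_zero (by rw [hw1]; norm_num :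
    ∑ σ : Equiv.Perm (Fin n), w σ ≠ 0)
  exact ⟨σ, fun a => lt_of_lt_of_le (lt_of_le_of_ne (hw0 σ) (Ne.symm hσ.2)) (entry_ge w hw0 hw3 σ a)⟩

lemma inner_eq_diag {n : ℕ} {X : Matrix (Fin n) (Fin n) ℝ} (hX : DoublyStochastic X)
    (hRC : RCDS X) (σ0 : Equiv.Perm (Fin n)) (hσ0 : ∀ a, 0 < X a (σ0 a))
    (N : Matrix (Fin n) (Fin n) ℝ) (hN : DoublyStochastic N)
    (hsupp : ∀ a b, X a b = 0 → N a b = 0) :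
    ∑ a, ∑ b, X a b * N a b = ∑ a, X a (σ0 a) := by
  obtain ⟨w, hw0, hw1, hw3⟩ := exists_eq_sum_perm_of_mem_doublyStochastic (myDS_mem hN)
  have key : ∑ a, ∑ b, X a b * N a b
      = ∑ σ : Equiv.Perm (Fin n), w σ * ∑ a, X a (σ a) := by
    have hN' : ∀ a b, X a b * N a b
        = ∑ σ : Equiv.Perm (Fin n), (if σ a = b then w σ * X a b else 0) := by
      intro a b
      rw [← hw3]
      simp only [Matrix.sum_apply, Matrix.smul_apply, smul_eq_mul, myPermMatrix_apply,
        Finset.mul_sum]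
      refine Finset.sum_congr rfl fun σ _ => ?_
      by_cases h : σ a = b <;> simp [h] <;> ring
    simp only [hN']
    calc ∑ a, ∑ b, ∑ σ : Equiv.Perm (Fin n), (if σ a = b then w σ * X a b else 0)
        = ∑ a, ∑ σ : Equiv.Perm (Fin n), ∑ b, (if σ a = b then w σ * X a b else 0) := by
          exact Finset.sum_congr rfl fun a _ => Finset.sum_comm
      _ = ∑ a, ∑ σ : Equiv.Perm (Fin n), w σ * X a (σ a) := by
          refine Finset.sum_congr rfl fun a _ => Finset.sum_congr rfl fun σ _ => ?_
          simp
      _ = ∑ σ : Equiv.Perm (Fin n), ∑ a, w σ * X a (σ a) := Finset.sum_comm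
      _ = ∑ σ : Equiv.Perm (Fin n), w σ * ∑ a, X a (σ a) := by
          exact Finset.sum_congr rfl fun σ _ => (Finset.mul_sum _ _ _).symm
  rw [key]
  have : ∀ σ : Equiv.Perm (Fin n), w σ * ∑ a, X a (σ a) = w σ * ∑ a, X a (σ0 a) := by
    intro σ
    by_cases h : w σ = 0
    · simp [h]
    · have hpos : ∀ a, 0 < X a (σ a) := fun a => by
        have h1 : 0 < w σ := lt_of_le_of_ne (hw0 σ) (Ne.symm h)
        have h2 := entry_ge w hw0 hw3 σ a
        have h3 : 0 < N a (σ a) := lt_of_lt_of_le h1 h2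
        rcases lt_or_eq_of_le (hX.1 a (σ a)) with h' | h'
        · exact h'
        · exact absurd (hsupp a (σ a) h'.symm) (ne_of_gt h3)
      rw [hRC σ σ0 hpos hσ0]
  rw [Finset.sum_congr rfl (fun σ _ => this σ), ← Finset.sum_mul, hw1, one_mul]

/-- Main RCDS pattern criterion: for a fully indecomposable (0,1)-matrix `A` and
any solution `(u, v)` of the system `r_i u_i + ∑_{j : a_ij=1} v_j = 1`,
`s_j v_j + ∑_{i : a_ij=1} u_i = 1`, the matrix `A` is the pattern of an RCDS
doubly stochastic matrix iff `u_i + v_j > 0` whenever `a_ij = 1`. -/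
theorem rcds_pattern_criterion {n : ℕ} (A : Matrix (Fin n) (Fin n) ℝ)
    (hA01 : ∀ i j, A i j = 0 ∨ A i j = 1)
    (hFI : FullyIndecomposable A)
    (u v : Fin n → ℝ)
    (hu : ∀ i, (∑ j, A i j) * u i + ∑ j, A i j * v j = 1)
    (hv : ∀ j, (∑ i, A i j) * v j + ∑ i, A i j * u i = 1) :
    (∃ X : Matrix (Fin n) (Fin n) ℝ, DoublyStochastic X ∧ RCDS X ∧
        (∀ i j, X i j = 0 ↔ A i j = 0)) ↔
      (∀ i j, A i j = 1 → 0 < u i + v j) := by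
  classical
  set Y : Matrix (Fin n) (Fin n) ℝ := fun a b => A a b * (u a + v b) with hY
  have hYrow : ∀ a, ∑ b, Y a b = 1 := by
    intro a
    have : ∑ b, Y a b = (∑ b, A a b) * u a + ∑ b, A a b * v b := by
      simp [hY, mul_add, Finset.sum_add_distrib, Finset.sum_mul]
    rw [this, hu a]
  have hYcol : ∀ b, ∑ a, Y a b = 1 := by
    intro b
    have : ∑ a, Y a b = (∑ a, A a b) * v b + ∑ a, A a b * u a := by
      simp [hY, mul_add, Finset.sum_add_distrib, Finset.sum_mul]
      rw [add_comm]
    rw [this, hv b]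
  constructor
  · rintro ⟨X, ⟨hXnn, hXr, hXc⟩, hRC, hpat⟩ i j hij
    have hAX0 : ∀ a b, A a b = 0 → X a b = 0 := fun a b h => (hpat a b).mpr h
    have hXpos : ∀ a b, A a b = 1 → 0 < X a b := by
      intro a b h
      rcases lt_or_eq_of_le (hXnn a b) with h' | h'
      · exact h'
      · exfalso
        have h0 := (hpat a b).mp h'.symm
        rw [h0] at h
        exact zero_ne_one h
    have hXA : ∀ a b, X a b * A a b = X a b := by
      intro a b
      rcases hA01 a b with h | h
      · rw [h, mul_zero, hAX0 a b h]
      · rw [h, mul_one]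
    have hYA : ∀ a b, Y a b * A a b = Y a b := by
      intro a b
      rcases hA01 a b with h | h <;> simp [hY, h]
    have hIP : ∀ (M : Matrix (Fin n) (Fin n) ℝ), (∀ a, ∑ b, M a b = 1) →
        (∀ b, ∑ a, M a b = 1) → (∀ a b, M a b * A a b = M a b) →
        ∑ a, ∑ b, M a b * Y a b = (∑ a, u a) + (∑ b, v b) := by
      intro M hr hc hMA
      have hsplit : ∀ a b, M a b * Y a b = M a b * u a + M a b * v b := by
        intro a b
        calc M a b * Y a b = (M a b * A a b) * (u a + v b) := by rw [hY]; ring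
          _ = M a b * u a + M a b * v b := by rw [hMA]; ring
      simp only [hsplit, Finset.sum_add_distrib]
      have h1 : ∑ a, ∑ b, M a b * u a = ∑ a, u a :=
        Finset.sum_congr rfl fun a _ => by rw [← Finset.sum_mul, hr a, one_mul]
      have h2 : ∑ a, ∑ b, M a b * v b = ∑ b, v b := by
        rw [Finset.sum_comm]
        exact Finset.sum_congr rfl fun b _ => by rw [← Finset.sum_mul, hc b, one_mul]
      rw [h1, h2]
    have hS_XY : ∑ a, ∑ b, X a b * Y a b = (∑ a, u a) + (∑ b, v b) := hIP X hXr hXc hXA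
    have hS_YY : ∑ a, ∑ b, Y a b * Y a b = (∑ a, u a) + (∑ b, v b) := hIP Y hYrow hYcol hYA
    obtain ⟨σ0, hσ0⟩ := exists_support_perm ⟨hXnn, hXr, hXc⟩
    set c := ∑ a, X a (σ0 a) with hc
    have hXX : ∑ a, ∑ b, X a b * X a b = c :=
      inner_eq_diag ⟨hXnn, hXr, hXc⟩ hRC σ0 hσ0 X ⟨hXnn, hXr, hXc⟩ (fun a b h => h)
    set E : Finset (Fin n × Fin n) := Finset.univ.filter (fun p => A p.1 p.2 = 1) with hE
    have hEne : E.Nonempty := ⟨(i, j), by simp [hE, hij]⟩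
    set t : ℝ := E.inf' hEne (fun p => X p.1 p.2 / (|Y p.1 p.2 - X p.1 p.2| + 1)) with hT
    have ht0 : 0 < t := by
      rw [hT, Finset.lt_inf'_iff]
      intro p hp
      have hp1 : A p.1 p.2 = 1 := by simpa [hE] using hp
      exact div_pos (hXpos _ _ hp1) (by positivity)
    set M : Matrix (Fin n) (Fin n) ℝ := fun a b => X a b + t * (Y a b - X a b) with hM
    have hMr : ∀ a, ∑ b, M a b = 1 := by
      intro a
      have : ∑ b, M a b = (∑ b, X a b) + t * ((∑ b, Y a b) - (∑ b, X a b)) := by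
        simp only [hM]
        rw [Finset.sum_add_distrib, ← Finset.mul_sum, Finset.sum_sub_distrib]
      rw [this, hXr a, hYrow a]; ring
    have hMc : ∀ b, ∑ a, M a b = 1 := by
      intro b
      have : ∑ a, M a b = (∑ a, X a b) + t * ((∑ a, Y a b) - (∑ a, X a b)) := by
        simp only [hM]
        rw [Finset.sum_add_distrib, ← Finset.mul_sum, Finset.sum_sub_distrib]
      rw [this, hXc b, hYcol b]; ring
    have hMnn : ∀ a b, 0 ≤ M a b := by
      intro a b
      rcases hA01 a b with h | h
      · have hX0 := hAX0 a b h
        have hY0 : Y a b = 0 := by simp [hY, h]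
        simp [hM, hX0, hY0]
      · have hmem : (a, b) ∈ E := by simp [hE, h]
        have hle : t ≤ X a b / (|Y a b - X a b| + 1) :=
          Finset.inf'_le (fun p => X p.1 p.2 / (|Y p.1 p.2 - X p.1 p.2| + 1)) hmem
        have hXp : 0 < X a b := hXpos a b h
        have habs : -|Y a b - X a b| ≤ Y a b - X a b := neg_abs_le _
        have h1 : t * |Y a b - X a b| ≤ X a b / (|Y a b - X a b| + 1) * |Y a b - X a b| :=
          mul_le_mul_of_nonneg_right hle (abs_nonneg _)
        have h2 : X a b / (|Y a b - X a b| + 1) * |Y a b - X a b| ≤ X a b := by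
          rw [div_mul_eq_mul_div, div_le_iff₀ (by positivity)]
          nlinarith [abs_nonneg (Y a b - X a b), hXp.le]
        have h3 : -(t * |Y a b - X a b|) ≤ t * (Y a b - X a b) := by
          nlinarith [ht0.le]
        show 0 ≤ X a b + t * (Y a b - X a b)
        linarith
    have hMsupp : ∀ a b, X a b = 0 → M a b = 0 := by
      intro a b h
      have hA0 : A a b = 0 := by
        rcases hA01 a b with h' | h'
        · exact h'
        · exact absurd h (ne_of_gt (hXpos a b h'))
      have hY0 : Y a b = 0 := by simp [hY, hA0]
      show X a b + t * (Y a b - X a b) = 0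
      rw [h, hY0]; ring
    have hXM : ∑ a, ∑ b, X a b * M a b = c :=
      inner_eq_diag ⟨hXnn, hXr, hXc⟩ hRC σ0 hσ0 M ⟨hMnn, hMr, hMc⟩ hMsupp
    have hlin : ∑ a, ∑ b, X a b * M a b
        = (∑ a, ∑ b, X a b * X a b) + t * ((∑ a, ∑ b, X a b * Y a b) - (∑ a, ∑ b, X a b * X a b)) := by
      have hsplit : ∀ a b, X a b * M a b
          = X a b * X a b + (t * (X a b * Y a b) - t * (X a b * X a b)) := by
        intro a b; show X a b * (X a b + t * (Y a b - X a b)) = _; ring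
      simp only [hsplit, Finset.sum_add_distrib, Finset.sum_sub_distrib, ← Finset.mul_sum]
      ring
    have hSc : (∑ a, u a) + (∑ b, v b) = c := by
      rw [hXM, hXX, hS_XY] at hlin
      have ht' : t * ((∑ a, u a) + (∑ b, v b) - c) = 0 := by linarith
      rcases mul_eq_zero.mp ht' with h | h
      · exact absurd h (ne_of_gt ht0)
      · linarith
    have hsum0 : ∑ a, ∑ b, (Y a b - X a b) ^ 2 = 0 := by
      have hexp : ∀ a b : Fin n, (Y a b - X a b) ^ 2
          = Y a b * Y a b - 2 * (X a b * Y a b) + X a b * X a b := fun a b => by ring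
      simp only [hexp, Finset.sum_add_distrib, Finset.sum_sub_distrib, ← Finset.mul_sum]
      rw [hS_YY, hS_XY, hXX]
      linarith
    have h1 : ∑ b, (Y i b - X i b) ^ 2 = 0 :=
      (Finset.sum_eq_zero_iff_of_nonneg
        (fun a _ => Finset.sum_nonneg fun b _ => sq_nonneg _)).mp hsum0 i (Finset.mem_univ i)
    have h2 : (Y i j - X i j) ^ 2 = 0 :=
      (Finset.sum_eq_zero_iff_of_nonneg (fun b _ => sq_nonneg _)).mp h1 j (Finset.mem_univ j)
    have hYX : Y i j = X i j := by
      have := pow_eq_zero_iff (n := 2) (by norm_num) |>.mp h2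
      linarith [sub_eq_zero.mp this]
    have hYuv : Y i j = u i + v j := by simp [hY, hij]
    rw [← hYuv, hYX]
    exact hXpos i j hij
  · intro hpos
    refine ⟨Y, ⟨?_, hYrow, hYcol⟩, ?_, ?_⟩
    · intro a b
      rcases hA01 a b with h | h
      · simp [hY, h]
      · have := hpos a b h
        simp only [hY, h, one_mul]
        exact le_of_lt this
    · intro σ τ hσ hτ
      have hA1 : ∀ (ρ : Equiv.Perm (Fin n)), (∀ a, 0 < Y a (ρ a)) →
          ∑ a, Y a (ρ a) = (∑ a, u a) + (∑ a, v a) := by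
        intro ρ hρ
        have : ∀ a, Y a (ρ a) = u a + v (ρ a) := by
          intro a
          rcases hA01 a (ρ a) with h | h
          · exfalso; have := hρ a; simp [hY, h] at this
          · simp [hY, h]
        simp only [this, Finset.sum_add_distrib]
        rw [Equiv.sum_comp ρ v]
      rw [hA1 σ hσ, hA1 τ hτ]
    · intro a b
      constructor
      · intro h
        rcases hA01 a b with h' | h'
        · exact h'
        · exfalso
          have := hpos a b h'
          simp only [hY, h', one_mul] at h
          linarith
      · intro h; simp [hY, h]
end

section
/- Let X = [x_ij] be an n×n RCDS doubly stochastic matrix. Let i₁ ≠ i₂ be row indices and j₁ ≠ j₂ be column indices such that the four entries x_{i₁j₁}, x_{i₁j₂}, x_{i₂j₁}, x_{i₂j₂} are all positive, and such that the complementary (n−2)×(n−2) submatrix of X obtained by deleting rows i₁, i₂ and columns j₁, j₂ has term rank n−2. Then x_{i₁j₁} + x_{i₂j₂} = x_{i₁j₂} + x_{i₂j₁}, i.e., the two diagonals of the 2×2 submatrix on rows i₁, i₂ and columns j₁, j₂ have the same sum. -/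
/-- If `X` is an RCDS doubly stochastic matrix with a positive `2×2` submatrix on
rows `i₁ ≠ i₂` and columns `j₁ ≠ j₂`, whose complementary `(n-2)×(n-2)` submatrix
has term rank `n-2` (expressed as: there is an injection `f` carrying each of the
remaining `n-2` rows to a column outside `{j₁, j₂}` where `X` is nonzero), then
the two diagonals of the `2×2` submatrix have the same sum. -/
theorem rcds_two_by_two {n : ℕ} (X : Matrix (Fin n) (Fin n) ℝ)
    (hDS : DoublyStochastic X) (hRCDS : RCDS X)
    (i₁ i₂ j₁ j₂ : Fin n) (hi : i₁ ≠ i₂) (hj : j₁ ≠ j₂)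
    (h11 : 0 < X i₁ j₁) (h12 : 0 < X i₁ j₂)
    (h21 : 0 < X i₂ j₁) (h22 : 0 < X i₂ j₂)
    (hterm : ∃ f : Fin n → Fin n, Function.Injective f ∧
        ∀ i, i ≠ i₁ → i ≠ i₂ → f i ≠ j₁ ∧ f i ≠ j₂ ∧ X i (f i) ≠ 0) :
    X i₁ j₁ + X i₂ j₂ = X i₁ j₂ + X i₂ j₁ := by
  obtain ⟨f, hfinj, hf⟩ := hterm
  set g : Fin n → Fin n := fun i => if i = i₁ then j₁ else if i = i₂ then j₂ else f i with hg
  have hgval : ∀ i, i ≠ i₁ → i ≠ i₂ → g i = f i := by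
    intro i h1 h2; simp [hg, h1, h2]
  have hg1 : g i₁ = j₁ := by simp [hg]
  have hg2 : g i₂ = j₂ := by simp [hg, hi.symm]
  have hginj : Function.Injective g := by
    intro a b hab
    by_cases ha1 : a = i₁
    · by_cases hb1 : b = i₁
      · rw [ha1, hb1]
      · by_cases hb2 : b = i₂
        · subst ha1; subst hb2; rw [hg1, hg2] at hab; exact absurd hab hj
        · subst ha1; rw [hg1, hgval b hb1 hb2] at hab
          exact absurd hab.symm (hf b hb1 hb2).1
    · by_cases ha2 : a = i₂
      · by_cases hb1 : b = i₁
        · subst ha2; subst hb1; rw [hg2, hg1] at hab; exact absurd hab hj.symm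
        · by_cases hb2 : b = i₂
          · rw [ha2, hb2]
          · subst ha2; rw [hg2, hgval b hb1 hb2] at hab
            exact absurd hab.symm (hf b hb1 hb2).2.1
      · by_cases hb1 : b = i₁
        · subst hb1; rw [hg1, hgval a ha1 ha2] at hab
          exact absurd hab (hf a ha1 ha2).1
        · by_cases hb2 : b = i₂
          · subst hb2; rw [hg2, hgval a ha1 ha2] at hab
            exact absurd hab (hf a ha1 ha2).2.1
          · rw [hgval a ha1 ha2, hgval b hb1 hb2] at hab
            exact hfinj hab
  have hgbij : Function.Bijective g := Finite.injective_iff_bijective.mp hginj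
  set σ : Equiv.Perm (Fin n) := Equiv.ofBijective g hgbij with hσ
  set τ : Equiv.Perm (Fin n) := σ.trans (Equiv.swap j₁ j₂) with hτ
  have hσap : ∀ i, σ i = g i := fun i => rfl
  have hτap : ∀ i, τ i = Equiv.swap j₁ j₂ (g i) := fun i => rfl
  have hτ1 : τ i₁ = j₂ := by rw [hτap, hg1, Equiv.swap_apply_left]
  have hτ2 : τ i₂ = j₁ := by rw [hτap, hg2, Equiv.swap_apply_right]
  have hτo : ∀ i, i ≠ i₁ → i ≠ i₂ → τ i = f i := by
    intro i h1 h2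
    rw [hτap, hgval i h1 h2, Equiv.swap_apply_of_ne_of_ne (hf i h1 h2).1 (hf i h1 h2).2.1]
  have hpos : ∀ i, i ≠ i₁ → i ≠ i₂ → 0 < X i (f i) :=
    fun i h1 h2 => lt_of_le_of_ne (hDS.1 i (f i)) (Ne.symm (hf i h1 h2).2.2)
  have hσpos : ∀ i, 0 < X i (σ i) := by
    intro i
    by_cases h1 : i = i₁
    · subst h1; rw [hσap, hg1]; exact h11
    by_cases h2 : i = i₂
    · subst h2; rw [hσap, hg2]; exact h22
    · rw [hσap, hgval i h1 h2]; exact hpos i h1 h2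
  have hτpos : ∀ i, 0 < X i (τ i) := by
    intro i
    by_cases h1 : i = i₁
    · subst h1; rw [hτ1]; exact h12
    by_cases h2 : i = i₂
    · subst h2; rw [hτ2]; exact h21
    · rw [hτo i h1 h2]; exact hpos i h1 h2
  have hsum := hRCDS σ τ hσpos hτpos
  have hsub : ({i₁, i₂} : Finset (Fin n)) ⊆ Finset.univ := Finset.subset_univ _
  have hdecomp : ∀ ρ : Equiv.Perm (Fin n),
      ∑ i, X i (ρ i) = ∑ i ∈ Finset.univ \ {i₁, i₂}, X i (ρ i) + (X i₁ (ρ i₁) + X i₂ (ρ i₂)) := by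
    intro ρ
    rw [← Finset.sum_sdiff hsub, Finset.sum_pair hi]
  rw [hdecomp σ, hdecomp τ] at hsum
  have heq : ∑ i ∈ Finset.univ \ {i₁, i₂}, X i (σ i)
      = ∑ i ∈ Finset.univ \ {i₁, i₂}, X i (τ i) := by
    apply Finset.sum_congr rfl
    intro i hi'
    simp only [Finset.mem_sdiff, Finset.mem_insert, Finset.mem_singleton] at hi'
    push_neg at hi'
    rw [hσap, hgval i hi'.2.1 hi'.2.2, hτo i hi'.2.1 hi'.2.2]
  rw [hσap i₁, hσap i₂, hg1, hg2, hτ1, hτ2, heq] at hsum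
  linarith
end

section
/- Let n ≥ 2 and let A = [a_ij] be the n×n tridiagonal (0,1)-matrix with a_ij = 1 whenever |i−j| ≤ 1 and a_ij = 0 otherwise. Then the linear system x_{i−1} + 4x_i + x_{i+1} = 2 for i = 1,…,n−1, with the convention x_0 = x_n = 0, has a unique solution (x_1,…,x_{n−1}); this solution satisfies x_i > 0 for i = 1,…,n−1 and x_{i−1} + x_i < 1 for i = 1,…,n; and the symmetric tridiagonal matrix X = X(x) with superdiagonal and subdiagonal entries x_{i,i+1} = x_{i+1,i} = x_i (i = 1,…,n−1), main diagonal entries x_{ii} = 1 − x_{i−1} − x_i (i = 1,…,n), and all other entries zero, is an RCDS doubly stochastic matrix with ξ(X) = ξ(A). In particular, A is the pattern of an RCDS doubly stochastic matrix. -/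
theorem rcds_of_apply_eq_add {n : ℕ} {X : Matrix (Fin n) (Fin n) ℝ} (a b : Fin n → ℝ)
    (h : ∀ i j, X i j ≠ 0 → X i j = a i + b j) : RCDS X := by
  have key : ∀ σ : Equiv.Perm (Fin n), (∀ i, 0 < X i (σ i)) →
      ∑ i, X i (σ i) = ∑ i, a i + ∑ i, b i := fun σ hσ => by
    rw [Finset.sum_congr rfl fun i _ => h i (σ i) (hσ i).ne', Finset.sum_add_distrib,
      Equiv.sum_comp σ b]
  exact fun σ τ hσ hτ => (key σ hσ).trans (key τ hτ).symm

def shoot (c a : ℝ) : ℕ → ℝ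
  | 0 => 0
  | 1 => a
  | k + 2 => c - shoot c a k - 4 * shoot c a (k + 1)

theorem shoot_eq_add_mul (c a : ℝ) : ∀ k, shoot c a k = shoot c 0 k + a * shoot 0 1 k
  | 0 => by simp [shoot]
  | 1 => by simp [shoot]
  | k + 2 => by
    simp only [shoot, shoot_eq_add_mul c a k, shoot_eq_add_mul c a (k + 1)]
    ring

theorem one_le_abs_shoot_zero_one_succ_and_abs_le (k : ℕ) :
    1 ≤ |shoot 0 1 (k + 1)| ∧ |shoot 0 1 k| ≤ |shoot 0 1 (k + 1)| := by
  induction k with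
  | zero => simp [shoot]
  | succ k ih =>
    have h : 4 * |shoot 0 1 (k + 1)| ≤ |shoot 0 1 (k + 2)| + |shoot 0 1 k| := by
      have : 4 * shoot 0 1 (k + 1) = -shoot 0 1 (k + 2) + -shoot 0 1 k := by
        simp only [shoot]; ring
      calc 4 * |shoot 0 1 (k + 1)| = |4 * shoot 0 1 (k + 1)| := by simp [abs_mul]
        _ ≤ |shoot 0 1 (k + 2)| + |shoot 0 1 k| := by
          rw [this, ← abs_neg (shoot 0 1 (k + 2)), ← abs_neg (shoot 0 1 k)]
          exact abs_add_le _ _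
    constructor <;> linarith [ih.1, ih.2]

theorem shoot_zero_one_ne_zero {k : ℕ} (hk : k ≠ 0) : shoot 0 1 k ≠ 0 := by
  obtain ⟨k, rfl⟩ := Nat.exists_eq_succ_of_ne_zero hk
  exact abs_pos.1 (one_pos.trans_le (one_le_abs_shoot_zero_one_succ_and_abs_le k).1)

theorem eq_shoot_of_recurrence {c : ℝ} {N : ℕ} {y : ℕ → ℝ} (h0 : y 0 = 0)
    (hy : ∀ k, k + 2 ≤ N → y k + 4 * y (k + 1) + y (k + 2) = c) :
    ∀ k, k ≤ N → y k = shoot c (y 1) k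
  | 0, _ => h0
  | 1, _ => rfl
  | k + 2, hk => by
    rw [shoot, ← eq_shoot_of_recurrence h0 hy k (by omega),
      ← eq_shoot_of_recurrence h0 hy (k + 1) (by omega)]
    linarith [hy k hk]

structure SolvesBoundaryProblem (n : ℕ) (x : ℕ → ℝ) : Prop where
  zero : x 0 = 0
  last : x n = 0
  step : ∀ k, k + 2 ≤ n → x k + 4 * x (k + 1) + x (k + 2) = 2

theorem recurrence_iff_shift {n : ℕ} {x : ℕ → ℝ} :
    (∀ i, 1 ≤ i → i ≤ n - 1 → x (i - 1) + 4 * x i + x (i + 1) = 2) ↔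
      ∀ k, k + 2 ≤ n → x k + 4 * x (k + 1) + x (k + 2) = 2 := by
  refine ⟨fun h k hk => by simpa using h (k + 1) (by omega) (by omega), fun h i h1 h2 => ?_⟩
  obtain ⟨k, rfl⟩ := Nat.exists_eq_add_of_le' h1
  simpa using h k (by omega)

theorem exists_solvesBoundaryProblem (n : ℕ) : ∃ x, SolvesBoundaryProblem n x := by
  rcases eq_or_ne n 0 with rfl | hn
  · exact ⟨shoot 2 0, rfl, rfl, fun k hk => by omega⟩
  refine ⟨shoot 2 (-shoot 2 0 n / shoot 0 1 n), rfl, ?_, fun k _ => by simp only [shoot]; ring⟩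
  rw [shoot_eq_add_mul, div_mul_cancel₀ _ (shoot_zero_one_ne_zero hn)]
  ring

namespace SolvesBoundaryProblem

variable {n : ℕ} {x : ℕ → ℝ}

theorem unique {y : ℕ → ℝ} (hx : SolvesBoundaryProblem n x) (hy : SolvesBoundaryProblem n y)
    {k : ℕ} (hk : k ≤ n) : x k = y k := by
  rcases eq_or_ne n 0 with rfl | hn
  · rw [Nat.le_zero.1 hk, hx.zero, hy.zero]
  have hxn := eq_shoot_of_recurrence hx.zero hx.step n le_rfl
  have hyn := eq_shoot_of_recurrence hy.zero hy.step n le_rfl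
  rw [hx.last, shoot_eq_add_mul] at hxn
  rw [hy.last, shoot_eq_add_mul] at hyn
  have h1 : x 1 = y 1 := mul_right_cancel₀ (shoot_zero_one_ne_zero hn) (by linarith)
  rw [eq_shoot_of_recurrence hx.zero hx.step k hk, eq_shoot_of_recurrence hy.zero hy.step k hk,
    h1]

theorem eq_zero_or_interior (hx : SolvesBoundaryProblem n x) {j : ℕ} (hj : j ≤ n) :
    x j = 0 ∨ ∃ k, j = k + 1 ∧ k + 2 ≤ n := by
  rcases eq_or_ne j 0 with rfl | h0
  · exact .inl hx.zero
  rcases eq_or_ne j n with rfl | hn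
  · exact .inl hx.last
  exact .inr ⟨j - 1, by omega, by omega⟩

theorem mem_Icc (hx : SolvesBoundaryProblem n x) {k : ℕ} (hk : k ≤ n) :
    x k ∈ Set.Icc 0 (1 / 2) := by
  obtain ⟨i, hi, hmin⟩ := (Finset.range (n + 1)).exists_min_image x ⟨0, by simp⟩
  obtain ⟨j, hj, hmax⟩ := (Finset.range (n + 1)).exists_max_image x ⟨0, by simp⟩
  simp only [Finset.mem_range, Nat.lt_succ_iff] at hi hj hmin hmax
  have hmin0 : x i ≤ 0 := hx.zero ▸ hmin 0 (Nat.zero_le n)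
  have hmax_le : 4 * x j ≤ 2 - 2 * x i := by
    rcases hx.eq_zero_or_interior hj with h | ⟨l, rfl, hl⟩
    · linarith
    · linarith [hx.step l hl, hmin l (by omega), hmin (l + 2) hl]
  have hmin_nonneg : 0 ≤ x i := by
    rcases hx.eq_zero_or_interior hi with h | ⟨l, rfl, hl⟩
    · exact h.ge
    · linarith [hx.step l hl, hmax l (by omega), hmax (l + 2) hl]
  exact ⟨hmin_nonneg.trans (hmin k hk), (hmax k hk).trans (by linarith)⟩

theorem pos (hx : SolvesBoundaryProblem n x) {k : ℕ} (h0 : 0 < k) (hk : k < n) : 0 < x k := by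
  obtain ⟨l, rfl⟩ := Nat.exists_eq_add_of_le' h0
  linarith [hx.step l hk, (hx.mem_Icc (k := l) (by omega)).2, (hx.mem_Icc (k := l + 2) hk).2]

theorem add_succ_lt_one (hx : SolvesBoundaryProblem n x) {k : ℕ} (hk : k < n) :
    x k + x (k + 1) < 1 := by
  have hxk := (hx.mem_Icc hk.le).2
  rcases eq_or_ne (k + 1) n with hn | hn
  · rw [hn, hx.last]
    linarith
  · linarith [hx.step k (by omega), (hx.mem_Icc (k := k + 2) (by omega)).1]

end SolvesBoundaryProblem

/-- Rows are indexed from `0`, so the paper's `x_{i,i+1} = x_i` is the entry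
`(i, i+1) = x (i+1)`. -/
def tridiagMatrix (n : ℕ) (x : ℕ → ℝ) : Matrix (Fin n) (Fin n) ℝ :=
  Matrix.of fun i j =>
    if (j : ℕ) = (i : ℕ) + 1 then x ((i : ℕ) + 1)
    else if (i : ℕ) = (j : ℕ) + 1 then x ((j : ℕ) + 1)
    else if i = j then 1 - x (i : ℕ) - x ((i : ℕ) + 1)
    else 0

section tridiagMatrix

variable {n : ℕ} {x : ℕ → ℝ}

theorem tridiagMatrix_apply_diag (i : Fin n) :
    tridiagMatrix n x i i = 1 - x (i : ℕ) - x ((i : ℕ) + 1) := by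
  simp [tridiagMatrix]

theorem isSymm_tridiagMatrix : (tridiagMatrix n x).IsSymm := by
  refine Matrix.IsSymm.ext fun i j => ?_
  rcases eq_or_ne i j with rfl | hij
  · rfl
  simp only [tridiagMatrix, Matrix.of_apply, hij, hij.symm, if_false]
  split_ifs <;> first | rfl | omega

theorem tridiagMatrix_apply_eq_add (i j : Fin n) :
    tridiagMatrix n x i j =
      ((if (j : ℕ) = i + 1 then x j else 0) + if (i : ℕ) = j + 1 then x i else 0) +
        if (j : ℕ) = i then 1 - x i - x (i + 1) else 0 := by
  obtain ⟨i, hi⟩ := i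
  obtain ⟨j, hj⟩ := j
  simp only [tridiagMatrix, Matrix.of_apply, Fin.mk.injEq]
  split_ifs <;> subst_vars <;> first | omega | ring

theorem sum_tridiagMatrix_row (h0 : x 0 = 0) (hn : x n = 0) (i : Fin n) :
    ∑ j, tridiagMatrix n x i j = 1 := by
  simp only [tridiagMatrix_apply_eq_add, Finset.sum_add_distrib]
  rw [Fin.sum_univ_eq_sum_range (fun j => if j = i + 1 then x j else 0),
    Fin.sum_univ_eq_sum_range (fun j => if (i : ℕ) = j + 1 then x i else 0),
    Fin.sum_univ_eq_sum_range (fun j => if j = (i : ℕ) then 1 - x i - x (i + 1) else 0)]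
  have hsub : ∑ j ∈ Finset.range n, (if (i : ℕ) = j + 1 then x i else 0) = x i := by
    obtain ⟨_ | k, hk⟩ := i
    · simp [h0]
    · simp [Finset.sum_ite_eq, show k < n by omega]
  have hsup : (if (i : ℕ) + 1 < n then x (i + 1) else 0) = x (i + 1) := by
    split_ifs with h
    · rfl
    · rw [show (i : ℕ) + 1 = n by omega, hn]
  simp only [Finset.sum_ite_eq', Finset.mem_range, hsub, hsup, if_pos i.isLt]
  ring

theorem tridiagMatrix_apply_pos (hpos : ∀ k, 0 < k → k < n → 0 < x k)
    (hpair : ∀ k, k < n → x k + x (k + 1) < 1) {i j : Fin n}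
    (hij : (i : ℕ) ≤ j + 1 ∧ (j : ℕ) ≤ i + 1) : 0 < tridiagMatrix n x i j := by
  simp only [tridiagMatrix, Matrix.of_apply]
  split_ifs with h1 h2 h3
  · exact hpos _ (by omega) (by omega)
  · exact hpos _ (by omega) (by omega)
  · linarith [hpair i i.isLt]
  · exact absurd (Fin.ext (by omega)) h3

theorem tridiagMatrix_apply_eq_zero_of_not_band {i j : Fin n}
    (hij : ¬((i : ℕ) ≤ j + 1 ∧ (j : ℕ) ≤ i + 1)) : tridiagMatrix n x i j = 0 := by
  have hne : i ≠ j := fun h => hij (by simp [h])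
  simp only [tridiagMatrix, Matrix.of_apply, hne, if_false]
  split_ifs <;> first | rfl | omega

theorem tridiagMatrix_eq_zero_iff (hpos : ∀ k, 0 < k → k < n → 0 < x k)
    (hpair : ∀ k, k < n → x k + x (k + 1) < 1) {i j : Fin n} :
    tridiagMatrix n x i j = 0 ↔ ¬((i : ℕ) ≤ j + 1 ∧ (j : ℕ) ≤ i + 1) :=
  ⟨fun h hij => (tridiagMatrix_apply_pos hpos hpair hij).ne' h,
    tridiagMatrix_apply_eq_zero_of_not_band⟩

theorem doublyStochastic_tridiagMatrix (h0 : x 0 = 0) (hn : x n = 0)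
    (hpos : ∀ k, 0 < k → k < n → 0 < x k) (hpair : ∀ k, k < n → x k + x (k + 1) < 1) :
    DoublyStochastic (tridiagMatrix n x) := by
  refine ⟨fun i j => ?_, sum_tridiagMatrix_row h0 hn, fun j => ?_⟩
  · by_cases hij : (i : ℕ) ≤ j + 1 ∧ (j : ℕ) ≤ i + 1
    · exact (tridiagMatrix_apply_pos hpos hpair hij).le
    · exact (tridiagMatrix_apply_eq_zero_of_not_band hij).ge
  · exact (Finset.sum_congr rfl fun i _ => isSymm_tridiagMatrix.apply j i).trans
      (sum_tridiagMatrix_row h0 hn j)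

theorem tridiagMatrix_apply_eq_half_add
    (hx : ∀ k, k + 2 ≤ n → x k + 4 * x (k + 1) + x (k + 2) = 2) {i j : Fin n}
    (hij : tridiagMatrix n x i j ≠ 0) :
    tridiagMatrix n x i j = tridiagMatrix n x i i / 2 + tridiagMatrix n x j j / 2 := by
  rw [tridiagMatrix_apply_diag, tridiagMatrix_apply_diag]
  simp only [tridiagMatrix, Matrix.of_apply] at hij ⊢
  split_ifs at hij ⊢ with h1 h2 h3
  · rw [h1]
    linarith [hx i (by omega)]
  · rw [h2]
    linarith [hx j (by omega)]
  · rw [h3]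
    ring
  · exact absurd rfl hij

theorem rcds_tridiagMatrix (hx : ∀ k, k + 2 ≤ n → x k + 4 * x (k + 1) + x (k + 2) = 2) :
    RCDS (tridiagMatrix n x) :=
  rcds_of_apply_eq_add _ _ fun _ _ => tridiagMatrix_apply_eq_half_add hx

end tridiagMatrix

theorem tridiagonal_rcds_general (n : ℕ)
    (A : Matrix (Fin n) (Fin n) ℝ)
    (hA : ∀ i j, A i j =
      if ((i : ℕ) ≤ (j : ℕ) + 1 ∧ (j : ℕ) ≤ (i : ℕ) + 1) then 1 else 0) :
    ∃ x : ℕ → ℝ,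
      x 0 = 0 ∧ x n = 0 ∧
      (∀ i, 1 ≤ i → i ≤ n - 1 → x (i - 1) + 4 * x i + x (i + 1) = 2) ∧
      (∀ x' : ℕ → ℝ, x' 0 = 0 → x' n = 0 →
        (∀ i, 1 ≤ i → i ≤ n - 1 → x' (i - 1) + 4 * x' i + x' (i + 1) = 2) →
        ∀ i, 1 ≤ i → i ≤ n - 1 → x' i = x i) ∧
      (∀ i, 1 ≤ i → i ≤ n - 1 → 0 < x i) ∧
      (∀ i, 1 ≤ i → i ≤ n → x (i - 1) + x i < 1) ∧
      (∀ X : Matrix (Fin n) (Fin n) ℝ,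
        (∀ i j, X i j =
          if (j : ℕ) = (i : ℕ) + 1 then x ((i : ℕ) + 1)
          else if (i : ℕ) = (j : ℕ) + 1 then x ((j : ℕ) + 1)
          else if i = j then 1 - x (i : ℕ) - x ((i : ℕ) + 1)
          else 0) →
        DoublyStochastic X ∧ RCDS X ∧ (∀ i j, X i j = 0 ↔ A i j = 0)) := by
  obtain ⟨x, hx⟩ := exists_solvesBoundaryProblem n
  have hpos : ∀ k, 0 < k → k < n → 0 < x k := fun _ => hx.pos
  have hpair : ∀ k, k < n → x k + x (k + 1) < 1 := fun _ => hx.add_succ_lt_one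
  refine ⟨x, hx.zero, hx.last, recurrence_iff_shift.2 hx.step,
    fun y hy0 hyn hy i _ hi =>
      (hx.unique ⟨hy0, hyn, recurrence_iff_shift.1 hy⟩ (by omega)).symm,
    fun i h1 _ => hpos i h1 (by omega), fun i h1 _ => ?_, fun X hX => ?_⟩
  · simpa [Nat.sub_add_cancel h1] using hpair (i - 1) (by omega)
  obtain rfl : X = tridiagMatrix n x := Matrix.ext hX
  refine ⟨doublyStochastic_tridiagMatrix hx.zero hx.last hpos hpair, rcds_tridiagMatrix hx.step,
    fun i j => ?_⟩
  rw [tridiagMatrix_eq_zero_iff hpos hpair, hA]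
  simp

/-- The full tridiagonal pattern `A` (ones exactly where `|i-j| ≤ 1`, here with
rows and columns indexed `1,…,n`, i.e. 0-based `Fin n` shifted by one) is the
pattern of an RCDS doubly stochastic matrix `X = X(x)`, where the superdiagonal
vector `x = (x_1,…,x_{n-1})` (with convention `x_0 = x_n = 0`) is the unique
solution of `x_{i-1} + 4 x_i + x_{i+1} = 2` for `i = 1,…,n-1`; it satisfies
`x_i > 0` (for `i = 1,…,n-1`) and `x_{i-1} + x_i < 1` (for `i = 1,…,n`), and the
matrix `X` with `X_{i,i+1} = X_{i+1,i} = x_i` and `X_{ii} = 1 - x_{i-1} - x_i`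
is a doubly stochastic RCDS matrix with the same zero pattern as `A`. -/
theorem tridiagonal_rcds (n : ℕ) (hn : 2 ≤ n)
    (A : Matrix (Fin n) (Fin n) ℝ)
    (hA : ∀ i j, A i j =
      if ((i : ℕ) ≤ (j : ℕ) + 1 ∧ (j : ℕ) ≤ (i : ℕ) + 1) then 1 else 0) :
    ∃ x : ℕ → ℝ,
      x 0 = 0 ∧ x n = 0 ∧
      (∀ i, 1 ≤ i → i ≤ n - 1 → x (i - 1) + 4 * x i + x (i + 1) = 2) ∧
      (∀ x' : ℕ → ℝ, x' 0 = 0 → x' n = 0 →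
        (∀ i, 1 ≤ i → i ≤ n - 1 → x' (i - 1) + 4 * x' i + x' (i + 1) = 2) →
        ∀ i, 1 ≤ i → i ≤ n - 1 → x' i = x i) ∧
      (∀ i, 1 ≤ i → i ≤ n - 1 → 0 < x i) ∧
      (∀ i, 1 ≤ i → i ≤ n → x (i - 1) + x i < 1) ∧
      (∀ X : Matrix (Fin n) (Fin n) ℝ,
        (∀ i j, X i j =
          if (j : ℕ) = (i : ℕ) + 1 then x ((i : ℕ) + 1)
          else if (i : ℕ) = (j : ℕ) + 1 then x ((j : ℕ) + 1)
          else if i = j then 1 - x (i : ℕ) - x ((i : ℕ) + 1)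
          else 0) →
        DoublyStochastic X ∧ RCDS X ∧ (∀ i j, X i j = 0 ↔ A i j = 0)) :=
  tridiagonal_rcds_general n A hA
end

section
/- Let X = [x_ij] be an n×n doubly stochastic matrix all of whose entries are positive, and suppose that all diagonal sums of X are equal, i.e., ∑_{i=1}^n x_{i,σ(i)} is the same for every permutation σ of {1,…,n}. Then x_ij = 1/n for all i, j; that is, the only RCDS doubly stochastic matrix without any zeros is (1/n)J_n, where J_n is the n×n all-ones matrix. -/
/-!
Composing a permutation with the transposition of rows `i` and `k` changes its diagonal sum by
`X i (σ k) + X k (σ i) - X i (σ i) - X k (σ k)`. Since the permutation group is 2-transitive,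
constant diagonal sums therefore give `X i j + X k l = X i l + X k j` for all `i, j, k, l`.
Summing this identity over `k` and `l` and using the row and column sums gives
`n² X i j + n = 2 n`.
-/

open Finset

namespace Matrix

variable {ι R : Type*} [Fintype ι]

def HasConstDiagSums [AddCommMonoid R] (X : Matrix ι ι R) : Prop :=
  ∀ σ τ : Equiv.Perm ι, ∑ i, X i (σ i) = ∑ i, X i (τ i)

theorem sum_apply_mul_swap_add [DecidableEq ι] [AddCommMonoid R] (X : Matrix ι ι R)
    (σ : Equiv.Perm ι) {i k : ι} (hik : i ≠ k) :
    ∑ m, X m ((σ * Equiv.swap i k) m) + (X i (σ i) + X k (σ k)) =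
      ∑ m, X m (σ m) + (X i (σ k) + X k (σ i)) := by
  have hrest : ∑ m ∈ univ \ {i, k}, X m ((σ * Equiv.swap i k) m) =
      ∑ m ∈ univ \ {i, k}, X m (σ m) := by
    refine sum_congr rfl fun m hm => ?_
    simp only [mem_sdiff, mem_insert, mem_singleton, not_or] at hm
    rw [Equiv.Perm.mul_apply, Equiv.swap_apply_of_ne_of_ne hm.2.1 hm.2.2]
  rw [← sum_sdiff (subset_univ {i, k}), ← sum_sdiff (subset_univ {i, k}), hrest,
    sum_pair hik, sum_pair hik]
  simp only [Equiv.Perm.mul_apply, Equiv.swap_apply_left, Equiv.swap_apply_right]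
  abel

theorem HasConstDiagSums.apply_add_apply_eq [DecidableEq ι] [AddCancelCommMonoid R]
    {X : Matrix ι ι R} (hX : X.HasConstDiagSums) (i k j l : ι) :
    X i j + X k l = X i l + X k j := by
  rcases eq_or_ne i k with rfl | hik
  · exact add_comm _ _
  rcases eq_or_ne j l with rfl | hjl
  · rfl
  obtain ⟨σ, hσi, hσk⟩ := MulAction.is_two_pretransitive_iff.mp
    (Equiv.Perm.isMultiplyPretransitive ι 2) hik hjl
  rw [Equiv.Perm.smul_def] at hσi hσk
  have h := sum_apply_mul_swap_add X σ hik
  rw [hX (σ * Equiv.swap i k) σ, hσi, hσk] at h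
  exact add_left_cancel h

theorem eq_one_div_card_of_apply_add_apply_eq {X : Matrix ι ι ℝ}
    (hexch : ∀ i k j l, X i j + X k l = X i l + X k j)
    (hrow : ∀ i, ∑ j, X i j = 1) (hcol : ∀ j, ∑ i, X i j = 1) (i j : ι) :
    X i j = 1 / Fintype.card ι := by
  have hcard : (0 : ℝ) < Fintype.card ι := by
    exact_mod_cast Fintype.card_pos_iff.mpr ⟨i⟩
  have h := congrArg (fun f : ι → ι → ℝ => ∑ k, ∑ l, f k l) (funext₂ fun k l => hexch i k j l)
  simp only [sum_add_distrib, sum_const, card_univ, nsmul_eq_mul, hrow, ← mul_sum, hcol] at h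
  rw [eq_div_iff hcard.ne']
  refine mul_left_cancel₀ hcard.ne' ?_
  linarith

end Matrix

theorem rcds_positive_eq_uniform_general {n : ℕ} (X : Matrix (Fin n) (Fin n) ℝ)
    (hrow : ∀ i, ∑ j, X i j = 1)
    (hcol : ∀ j, ∑ i, X i j = 1)
    (hconst : ∀ σ τ : Equiv.Perm (Fin n), ∑ i, X i (σ i) = ∑ i, X i (τ i)) :
    ∀ i j, X i j = 1 / (n : ℝ) := by
  intro i j
  have hexch : ∀ i k j l, X i j + X k l = X i l + X k j :=
    Matrix.HasConstDiagSums.apply_add_apply_eq hconst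
  simpa using Matrix.eq_one_div_card_of_apply_add_apply_eq hexch hrow hcol i j

/-- The only doubly stochastic matrix with all entries positive and all diagonal
sums equal is `(1/n) Jₙ`. -/
theorem rcds_positive_eq_uniform {n : ℕ} (X : Matrix (Fin n) (Fin n) ℝ)
    (hnonneg : ∀ i j, 0 ≤ X i j)
    (hrow : ∀ i, ∑ j, X i j = 1)
    (hcol : ∀ j, ∑ i, X i j = 1)
    (hpos : ∀ i j, 0 < X i j)
    (hconst : ∀ σ τ : Equiv.Perm (Fin n), ∑ i, X i (σ i) = ∑ i, X i (τ i)) :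
    ∀ i j, X i j = 1 / (n : ℝ) :=
  rcds_positive_eq_uniform_general X hrow hcol hconst
end

section
/- Let r, s, n be positive integers with s < r < n, and define the n×n matrix X = X^{(r,s,n)} = [x_ij] by: x_ij = 1/r if i ≤ r and j ≤ s; x_ij = (r−s)/(r(n−s)) if i ≤ r and s < j ≤ n; x_ij = 0 if r < i ≤ n and j ≤ s; and x_ij = 1/(n−s) if r < i ≤ n and s < j ≤ n. Then X^{(r,s,n)} is an RCDS doubly stochastic matrix: it is doubly stochastic and all diagonal sums ∑_i x_{i,σ(i)} over permutations σ with x_{i,σ(i)} > 0 for all i are equal. -/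
/-!
If every diagonal entry `x i (σ i)` is positive, `σ` avoids the zero block (rows `≥ r`,
columns `< s`), so the `s` columns `< s` are all reached from rows `< r`. Hence `σ` picks
exactly `s` entries `1/r`, `r - s` entries `(r-s)/(r(n-s))` and `n - r` entries `1/(n-s)`,
whatever `σ` is. This count works for any matrix that is constant on four blocks with a zero
lower-left block.
-/

open Finset

section

variable {α M : Type*} [Fintype α] [AddCommMonoid M]

theorem sum_ite_ite_perm_of_imp (p q : α → Prop) [DecidablePred p] [DecidablePred q]
    (σ : Equiv.Perm α) (hσ : ∀ i, q (σ i) → p i) (a b c d : M) :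
    ∑ i, (if p i then (if q (σ i) then a else b) else (if q (σ i) then c else d)) =
      #{i | q i} • a + (#{i | p i} - #{i | q i}) • b + #{i | ¬ p i} • d := by
  have hpq : ({i | p i} : Finset α).filter (fun i => q (σ i)) = ({i | q (σ i)} : Finset α) := by
    ext i; simpa using hσ i
  have hq : #{i | q (σ i)} = #{i | q i} := card_equiv σ (by simp)
  have hsplit := card_filter_add_card_filter_not (s := {i | p i}) (p := fun i => q (σ i))
  have hbottom : ∀ i ∈ ({i | ¬ p i} : Finset α), (if q (σ i) then c else d) = d := by
    intro i hi
    simp only [mem_filter, mem_univ, true_and] at hi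
    exact if_neg (mt (hσ i) hi)
  rw [hpq, hq] at hsplit
  rw [sum_ite, sum_ite, sum_congr rfl hbottom, sum_const, sum_const, sum_const, hpq, hq,
    Nat.eq_sub_of_add_eq' hsplit]

theorem Fin.card_filter_not_val_lt {n k : ℕ} (hk : k ≤ n) :
    #{j : Fin n | ¬ (j : ℕ) < k} = n - k := by
  have := card_filter_add_card_filter_not (s := (univ : Finset (Fin n)))
    (p := fun j => (j : ℕ) < k)
  rw [Fin.card_filter_val_lt, min_eq_right hk, card_univ, Fintype.card_fin] at this
  omega

theorem sum_fin_ite_val_lt {n k : ℕ} (hk : k ≤ n) (a b : M) :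
    ∑ j : Fin n, (if (j : ℕ) < k then a else b) = k • a + (n - k) • b := by
  rw [sum_ite, sum_const, sum_const, Fin.card_filter_val_lt, min_eq_right hk,
    Fin.card_filter_not_val_lt hk]

end

theorem rcds_of_zero_block {n : ℕ} (p q : Fin n → Prop) [DecidablePred p] [DecidablePred q]
    (a b d : ℝ) :
    RCDS (Matrix.of fun i j => if p i then (if q j then a else b) else (if q j then 0 else d)) := by
  intro σ τ hσ hτ
  simp only [Matrix.of_apply] at hσ hτ ⊢
  have avoids_zero_block : ∀ π : Equiv.Perm (Fin n),
      (∀ i, 0 < if p i then (if q (π i) then a else b) else (if q (π i) then 0 else d)) →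
      ∀ i, q (π i) → p i := by
    intro π hπ i hq
    by_contra hp
    simpa [hp, hq] using hπ i
  rw [sum_ite_ite_perm_of_imp p q σ (avoids_zero_block σ hσ) a b 0 d,
    sum_ite_ite_perm_of_imp p q τ (avoids_zero_block τ hτ) a b 0 d]

noncomputable def zeroBlockMatrix (r s n : ℕ) : Matrix (Fin n) (Fin n) ℝ :=
  Matrix.of fun i j =>
    if (i : ℕ) < r then
      (if (j : ℕ) < s then 1 / (r : ℝ)
       else ((r : ℝ) - (s : ℝ)) / ((r : ℝ) * ((n : ℝ) - (s : ℝ))))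
    else
      (if (j : ℕ) < s then 0 else 1 / ((n : ℝ) - (s : ℝ)))

theorem zeroBlockMatrix_rcds (r s n : ℕ) : RCDS (zeroBlockMatrix r s n) :=
  rcds_of_zero_block _ _ _ _ _

section

variable {r s n : ℕ}

theorem zeroBlockMatrix_nonneg (hsr : s ≤ r) (hsn : s ≤ n) (i j : Fin n) :
    0 ≤ zeroBlockMatrix r s n i j := by
  have hrs : (0 : ℝ) ≤ r - s := sub_nonneg.mpr (by exact_mod_cast hsr)
  have hns : (0 : ℝ) ≤ n - s := sub_nonneg.mpr (by exact_mod_cast hsn)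
  simp only [zeroBlockMatrix, Matrix.of_apply]
  split_ifs
  · positivity
  · exact div_nonneg hrs (mul_nonneg r.cast_nonneg hns)
  · exact le_rfl
  · exact div_nonneg zero_le_one hns

theorem zeroBlockMatrix_sum_row (hr : 0 < r) (hsn : s < n) (i : Fin n) :
    ∑ j, zeroBlockMatrix r s n i j = 1 := by
  have hr₀ : (r : ℝ) ≠ 0 := Nat.cast_ne_zero.mpr hr.ne'
  have hns : (n : ℝ) - s ≠ 0 := sub_ne_zero.mpr (by exact_mod_cast hsn.ne')
  simp only [zeroBlockMatrix, Matrix.of_apply]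
  split_ifs
  all_goals
    rw [sum_fin_ite_val_lt hsn.le]
    simp only [nsmul_eq_mul, Nat.cast_sub hsn.le]
    field_simp
    ring

theorem zeroBlockMatrix_sum_col (hr : 0 < r) (hrn : r ≤ n) (hsn : s < n) (j : Fin n) :
    ∑ i, zeroBlockMatrix r s n i j = 1 := by
  have hr₀ : (r : ℝ) ≠ 0 := Nat.cast_ne_zero.mpr hr.ne'
  have hns : (n : ℝ) - s ≠ 0 := sub_ne_zero.mpr (by exact_mod_cast hsn.ne')
  simp only [zeroBlockMatrix, Matrix.of_apply]
  split_ifs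
  all_goals
    rw [sum_fin_ite_val_lt hrn]
    simp only [nsmul_eq_mul, Nat.cast_sub hrn]
    field_simp
    ring

theorem zeroBlockMatrix_doublyStochastic (hsr : s < r) (hrn : r < n) :
    DoublyStochastic (zeroBlockMatrix r s n) := by
  have hr : 0 < r := Nat.zero_lt_of_lt hsr
  have hsn : s < n := hsr.trans hrn
  exact ⟨zeroBlockMatrix_nonneg hsr.le hsn.le, zeroBlockMatrix_sum_row hr hsn,
    zeroBlockMatrix_sum_col hr hrn.le hsn⟩

end

theorem rcds_zero_block_general (r s n : ℕ) (hsr : s < r) (hrn : r < n)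
    (X : Matrix (Fin n) (Fin n) ℝ)
    (hX : ∀ i j : Fin n, X i j =
      if (i : ℕ) < r then
        (if (j : ℕ) < s then 1 / (r : ℝ)
         else ((r : ℝ) - (s : ℝ)) / ((r : ℝ) * ((n : ℝ) - (s : ℝ))))
      else
        (if (j : ℕ) < s then 0 else 1 / ((n : ℝ) - (s : ℝ)))) :
    DoublyStochastic X ∧ RCDS X := by
  obtain rfl : X = zeroBlockMatrix r s n := Matrix.ext hX
  exact ⟨zeroBlockMatrix_doublyStochastic hsr hrn, zeroBlockMatrix_rcds r s n⟩

/-- For positive integers `s < r < n`, the matrix `X^{(r,s,n)}` (with rows and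
columns of `Fin n` thought of as `1,…,n`, so `i ≤ r` reads `(i : ℕ) < r`)
defined by `x_ij = 1/r` if `i ≤ r, j ≤ s`; `(r-s)/(r(n-s))` if `i ≤ r, s < j`;
`0` if `r < i, j ≤ s`; and `1/(n-s)` if `r < i, s < j`, is an RCDS doubly
stochastic matrix. -/
theorem rcds_zero_block (r s n : ℕ) (hs : 0 < s) (hsr : s < r) (hrn : r < n)
    (X : Matrix (Fin n) (Fin n) ℝ)
    (hX : ∀ i j : Fin n, X i j =
      if (i : ℕ) < r then
        (if (j : ℕ) < s then 1 / (r : ℝ)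
         else ((r : ℝ) - (s : ℝ)) / ((r : ℝ) * ((n : ℝ) - (s : ℝ))))
      else
        (if (j : ℕ) < s then 0 else 1 / ((n : ℝ) - (s : ℝ)))) :
    DoublyStochastic X ∧ RCDS X :=
  rcds_zero_block_general r s n hsr hrn X hX
end

section
/- Let m ≥ 2, let r_1,…,r_m and s_1,…,s_m be positive integers, let s_{m+1} ≥ 0 be an integer, and suppose ∑_{t=1}^m r_t = ∑_{t=1}^{m+1} s_t = n. Let X be the n×n zig-zag matrix with block rows of heights r_1,…,r_m and block columns of widths s_1,…,s_{m+1}, in which the block in block row t and block column t is the constant matrix c_{2t−1}·J of size r_t×s_t with c_{2t−1} > 0 (for t = 1,…,m), the block in block row t and block column t+1 is the constant matrix c_{2t}·J of size r_t×s_{t+1} with c_{2t} > 0 (for t = 1,…,m, nonexistent when s_{t+1} = 0), and all other blocks are zero. Assume X is doubly stochastic and that the dimension conditions ∑_{i=1}^t s_i < ∑_{i=1}^t r_i < ∑_{i=1}^{t+1} s_i hold for t = 1,…,m−1, and additionally ∑_{i=1}^m s_i < n in case s_{m+1} > 0. Then X is an RCDS doubly stochastic matrix: all diagonal sums ∑_i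 x_{i,σ(i)} over permutations σ with x_{i,σ(i)} > 0 for all i are equal. -/
open Finset

private lemma block_exists (f : ℕ → ℕ) (m n : ℕ) (hm : 0 < m)
    (htot : ∑ a ∈ range m, f a = n) (i : ℕ) (hi : i < n) :
    ∃ t, t < m ∧ (∑ a ∈ range t, f a) ≤ i ∧ i < ∑ a ∈ range (t + 1), f a := by
  have hP : ∃ t, i < ∑ a ∈ range (t + 1), f a := by
    refine ⟨m - 1, ?_⟩
    have : m - 1 + 1 = m := by omega
    rw [this, htot]; exact hi
  classical
  set t₀ := Nat.find hP with ht₀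
  have h2 : i < ∑ a ∈ range (t₀ + 1), f a := Nat.find_spec hP
  have h1 : (∑ a ∈ range t₀, f a) ≤ i := by
    rcases Nat.eq_zero_or_pos t₀ with h | h
    · simp [h]
    · have := Nat.find_min hP (m := t₀ - 1) (by omega)
      have heq : t₀ - 1 + 1 = t₀ := by omega
      rw [heq] at this
      omega
  refine ⟨t₀, ?_, h1, h2⟩
  by_contra hc
  have hle : m ≤ t₀ := by omega
  have : (∑ a ∈ range m, f a) ≤ ∑ a ∈ range t₀, f a :=
    Finset.sum_le_sum_of_subset (range_subset_range.2 hle)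
  omega

private lemma block_unique (f : ℕ → ℕ) (i a b : ℕ)
    (ha : (∑ x ∈ range a, f x) ≤ i) (ha' : i < ∑ x ∈ range (a + 1), f x)
    (hb : (∑ x ∈ range b, f x) ≤ i) (hb' : i < ∑ x ∈ range (b + 1), f x) :
    a = b := by
  by_contra h
  rcases Nat.lt_or_ge a b with h1 | h1
  · have : (∑ x ∈ range (a + 1), f x) ≤ ∑ x ∈ range b, f x :=
      Finset.sum_le_sum_of_subset (range_subset_range.2 (by omega))
    omega
  · have h2 : b < a := by omega
    have : (∑ x ∈ range (b + 1), f x) ≤ ∑ x ∈ range a, f x :=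
      Finset.sum_le_sum_of_subset (range_subset_range.2 (by omega))
    omega

private noncomputable def vfun (d e : ℕ → ℝ) : ℕ → ℝ
  | 0 => 0
  | t + 1 => e t - d t + vfun d e t

/-- A doubly stochastic zig-zag matrix satisfying the dimension conditions is an
RCDS matrix.  Block rows and block columns are indexed `0,…,m-1` and `0,…,m`
(0-based); block row `t` has height `r t`, block column `t` has width `s t`, and
`R t = ∑_{a<t} r a`, `S t = ∑_{a<t} s a` are the partial sums, so row `i` lies in
block row `t` iff `R t ≤ i < R (t+1)`.  In block row `t`, the block in block
column `t` is the positive constant `d t`, the block in block column `t+1` is the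
positive constant `e t` (nonexistent when `s (t+1) = 0`), and all other entries
are zero.  The dimension conditions are `S t < R t < S (t+1)` for `t = 1,…,m-1`,
plus `S m < n` when the last block column is nonempty. -/
theorem zigzag_rcds (m : ℕ) (hm : 2 ≤ m) (r s : ℕ → ℕ) (d e : ℕ → ℝ) (n : ℕ)
    (hr : ∀ t, t < m → 0 < r t)
    (hs : ∀ t, t < m → 0 < s t)
    (hrn : ∑ t ∈ range m, r t = n)
    (hsn : ∑ t ∈ range (m + 1), s t = n)
    (hd : ∀ t, t < m → 0 < d t)
    (he : ∀ t, t < m → 0 < s (t + 1) → 0 < e t)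
    (X : Matrix (Fin n) (Fin n) ℝ)
    (hX : ∀ t, t < m → ∀ i j : Fin n,
      (∑ a ∈ range t, r a) ≤ (i : ℕ) → (i : ℕ) < ∑ a ∈ range (t + 1), r a →
      (((∑ a ∈ range t, s a) ≤ (j : ℕ) ∧ (j : ℕ) < ∑ a ∈ range (t + 1), s a →
          X i j = d t) ∧
       ((∑ a ∈ range (t + 1), s a) ≤ (j : ℕ) ∧ (j : ℕ) < ∑ a ∈ range (t + 2), s a →
          X i j = e t) ∧
       ((j : ℕ) < (∑ a ∈ range t, s a) ∨ (∑ a ∈ range (t + 2), s a) ≤ (j : ℕ) →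
          X i j = 0)))
    (hDS : DoublyStochastic X)
    (hdim : ∀ t, 1 ≤ t → t ≤ m - 1 →
      (∑ a ∈ range t, s a) < (∑ a ∈ range t, r a) ∧
      (∑ a ∈ range t, r a) < ∑ a ∈ range (t + 1), s a)
    (hlast : 0 < s m → (∑ a ∈ range m, s a) < n) :
    RCDS X := by
  intro σ τ hσ hτ
  have hex : ∀ i : Fin n, ∃ t, t < m ∧ (∑ a ∈ range t, r a) ≤ (i : ℕ) ∧
      (i : ℕ) < ∑ a ∈ range (t + 1), r a :=
    fun i => block_exists r m n (by omega) hrn i i.isLt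
  choose T hTm hT1 hT2 using hex
  have hexc : ∀ j : Fin n, ∃ t, t < m + 1 ∧ (∑ a ∈ range t, s a) ≤ (j : ℕ) ∧
      (j : ℕ) < ∑ a ∈ range (t + 1), s a :=
    fun j => block_exists s (m + 1) n (by omega) hsn j j.isLt
  choose C hCm hC1 hC2 using hexc
  have key : ∀ i j : Fin n, 0 < X i j →
      X i j = (d (T i) - vfun d e (T i)) + vfun d e (C j) := by
    intro i j hpos
    obtain ⟨h1, h2, h3⟩ := hX (T i) (hTm i) i j (hT1 i) (hT2 i)
    by_cases hc1 : (∑ a ∈ range (T i), s a) ≤ (j : ℕ) ∧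
        (j : ℕ) < ∑ a ∈ range (T i + 1), s a
    · have hcj : C j = T i := block_unique s j (C j) (T i) (hC1 j) (hC2 j) hc1.1 hc1.2
      rw [h1 hc1, hcj]; ring
    · by_cases hc2 : (∑ a ∈ range (T i + 1), s a) ≤ (j : ℕ) ∧
          (j : ℕ) < ∑ a ∈ range (T i + 2), s a
      · have hcj : C j = T i + 1 :=
          block_unique s j (C j) (T i + 1) (hC1 j) (hC2 j) hc2.1 hc2.2
        rw [h2 hc2, hcj]
        simp only [vfun]
        ring
      · have hz : X i j = 0 := h3 (by omega)
        linarith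
  have hsum : ∀ σ' : Equiv.Perm (Fin n), (∀ i, 0 < X i (σ' i)) →
      ∑ i, X i (σ' i) =
        (∑ i, (d (T i) - vfun d e (T i))) + ∑ j, vfun d e (C j) := by
    intro σ' hσ'
    calc ∑ i, X i (σ' i)
        = ∑ i, ((d (T i) - vfun d e (T i)) + vfun d e (C (σ' i))) :=
          Finset.sum_congr rfl fun i _ => key i (σ' i) (hσ' i)
      _ = (∑ i, (d (T i) - vfun d e (T i))) + ∑ i, vfun d e (C (σ' i)) :=
          Finset.sum_add_distrib
      _ = _ := by rw [Equiv.sum_comp σ' (fun j => vfun d e (C j))]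
  rw [hsum σ hσ, hsum τ hτ]
end

section
/- Let X = [x_ij] be an n×n doubly stochastic matrix, and let u, v, u', v' be real n-vectors such that u_i + v_j ≤ x_ij ≤ u'_i + v'_j for every position (i,j) with x_ij > 0. Then the diagonal width satisfies DW(X) ≤ ∑_{i=1}^n (u'_i − u_i) + ∑_{j=1}^n (v'_j − v_j). -/
/-- Upper bound on the diagonal width: if `uᵢ + vⱼ ≤ x_ij ≤ u'ᵢ + v'ⱼ` on the
support of a doubly stochastic matrix `X`, then the difference of any two
diagonal sums avoiding the zeros of `X` (and hence `DW(X)`) is at most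
`∑ (u'ᵢ - uᵢ) + ∑ (v'ⱼ - vⱼ)`. -/
theorem diagonal_width_upper_bound {n : ℕ} (X : Matrix (Fin n) (Fin n) ℝ)
    (hnonneg : ∀ i j, 0 ≤ X i j)
    (hrow : ∀ i, ∑ j, X i j = 1)
    (hcol : ∀ j, ∑ i, X i j = 1)
    (u v u' v' : Fin n → ℝ)
    (hbound : ∀ i j, 0 < X i j → u i + v j ≤ X i j ∧ X i j ≤ u' i + v' j) :
    ∀ σ τ : Equiv.Perm (Fin n), (∀ i, 0 < X i (σ i)) → (∀ i, 0 < X i (τ i)) →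
      ∑ i, X i (σ i) - ∑ i, X i (τ i) ≤
        ∑ i, (u' i - u i) + ∑ j, (v' j - v j) := by
  intro σ τ hσ hτ
  have h1 : ∑ i, X i (σ i) ≤ ∑ i, (u' i + v' (σ i)) :=
    Finset.sum_le_sum fun i _ => (hbound i (σ i) (hσ i)).2
  have h2 : ∑ i, (u i + v (τ i)) ≤ ∑ i, X i (τ i) :=
    Finset.sum_le_sum fun i _ => (hbound i (τ i) (hτ i)).1
  have hv' : ∑ i, v' (σ i) = ∑ j, v' j := Equiv.sum_comp σ v'
  have hv : ∑ i, v (τ i) = ∑ j, v j := Equiv.sum_comp τ v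
  simp only [Finset.sum_add_distrib, Finset.sum_sub_distrib, hv', hv] at *
  linarith
end

section
/- Let n ≥ 5 and let A = [a_ij] be the n×n (0,1)-matrix of the loopy star: a_{1j} = a_{j1} = 1 for all j = 1,…,n, a_{ii} = 1 for all i = 1,…,n, and a_ij = 0 for all i ≠ j with i, j ≥ 2. Then there is no RCDS doubly stochastic matrix X with ξ(X) = ξ(A); that is, A is not the pattern of an RCDS doubly stochastic matrix. -/
/-!
For every `k ≠ 0`, the identity and the transposition `(0 k)` are positive diagonals of the
loopy star. Equating their sums gives `x₀ₖ + xₖ₀ = x₀₀ + xₖₖ`, while row `k`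
and column `k` have only two nonzero entries each, so `xₖ₀ = x₀ₖ = 1 - xₖₖ`. Hence
`x₀ₖ = (1 + x₀₀) / 3 > 1 / 3` for all `n - 1 ≥ 4` indices `k ≠ 0`, and row `0` sums to more than `1`.
-/

open Finset

theorem Matrix.sum_diag_swap_add {ι R : Type*} [Fintype ι] [DecidableEq ι] [AddCommGroup R]
    (X : Matrix ι ι R) {i j : ι} (hij : i ≠ j) :
    ∑ k, X k (Equiv.swap i j k) + (X i i + X j j) = ∑ k, X k k + (X i j + X j i) := by
  have hj : j ∈ univ.erase i := mem_erase.2 ⟨hij.symm, mem_univ j⟩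
  rw [← add_sum_erase _ _ (mem_univ i), ← add_sum_erase _ _ hj,
    ← add_sum_erase _ (fun k => X k k) (mem_univ i), ← add_sum_erase _ _ hj,
    Equiv.swap_apply_left, Equiv.swap_apply_right,
    sum_congr rfl fun k hk => by
      rw [Equiv.swap_apply_of_ne_of_ne (ne_of_mem_erase (mem_of_mem_erase hk))
        (ne_of_mem_erase hk)]]
  abel

theorem RCDS.add_eq_add_of_swap {n : ℕ} {X : Matrix (Fin n) (Fin n) ℝ} (hX : RCDS X)
    (hdiag : ∀ k, 0 < X k k) {i j : Fin n} (hij : i ≠ j) (hpos_ij : 0 < X i j)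
    (hpos_ji : 0 < X j i) : X i j + X j i = X i i + X j j := by
  have hswap : ∀ k, 0 < X k (Equiv.swap i j k) := by
    intro k
    rcases eq_or_ne k i with rfl | hki
    · rwa [Equiv.swap_apply_left]
    rcases eq_or_ne k j with rfl | hkj
    · rwa [Equiv.swap_apply_right]
    rw [Equiv.swap_apply_of_ne_of_ne hki hkj]
    exact hdiag k
  have h := hX (Equiv.swap i j) 1 hswap hdiag
  have := X.sum_diag_swap_add hij
  simp only [Equiv.Perm.one_apply] at h
  linarith

section LoopyStar

variable {n : ℕ} [NeZero n] {X : Matrix (Fin n) (Fin n) ℝ}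

theorem loopyStar_entry_eq (hX : DoublyStochastic X) (hR : RCDS X)
    (hpos : ∀ i j, i = j ∨ i = 0 ∨ j = 0 → 0 < X i j)
    (hzero : ∀ i j, i ≠ j → i ≠ 0 → j ≠ 0 → X i j = 0) {k : Fin n} (hk : k ≠ 0) :
    3 * X 0 k = 1 + X 0 0 := by
  have hswap : X 0 k + X k 0 = X 0 0 + X k k :=
    hR.add_eq_add_of_swap (fun i => hpos i i (.inl rfl)) hk.symm
      (hpos 0 k (.inr (.inl rfl))) (hpos k 0 (.inr (.inr rfl)))
  have hrow : ∑ j, X k j = X k 0 + X k k :=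
    Fintype.sum_eq_add _ _ hk.symm fun j hj => hzero k j (Ne.symm hj.2) hk hj.1
  have hcol : ∑ i, X i k = X 0 k + X k k :=
    Fintype.sum_eq_add _ _ hk.symm fun i hi => hzero i k hi.2 hi.1 hk
  linarith [hX.2.1 k, hX.2.2 k]

theorem loopyStar_row_zero_sum (hX : DoublyStochastic X) (hR : RCDS X)
    (hpos : ∀ i j, i = j ∨ i = 0 ∨ j = 0 → 0 < X i j)
    (hzero : ∀ i j, i ≠ j → i ≠ 0 → j ≠ 0 → X i j = 0) :
    3 = 3 * X 0 0 + (n - 1) * (1 + X 0 0) := by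
  have hrow : 3 * ∑ j, X 0 j = 3 := by rw [hX.2.1 0, mul_one]
  rw [← add_sum_erase _ _ (mem_univ 0), mul_add, mul_sum,
    sum_congr rfl fun k hk => loopyStar_entry_eq hX hR hpos hzero (ne_of_mem_erase hk),
    sum_const, card_erase_of_mem (mem_univ 0), card_univ, Fintype.card_fin, nsmul_eq_mul,
    Nat.cast_pred (Nat.pos_of_neZero n)] at hrow
  exact hrow.symm

end LoopyStar

/-- For `n ≥ 5`, the loopy star pattern (ones exactly on the first row, the
first column, and the main diagonal) is not the pattern of an RCDS doubly
stochastic matrix. -/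
theorem loopy_star_not_rcds (n : ℕ) (hn : 5 ≤ n)
    (A : Matrix (Fin n) (Fin n) ℝ)
    (hA : ∀ i j, A i j = if (i = j ∨ (i : ℕ) = 0 ∨ (j : ℕ) = 0) then 1 else 0) :
    ¬ ∃ X : Matrix (Fin n) (Fin n) ℝ, DoublyStochastic X ∧ RCDS X ∧
        (∀ i j, X i j = 0 ↔ A i j = 0) := by
  have : NeZero n := ⟨by omega⟩
  rintro ⟨X, hX, hR, hpat⟩
  have hsupp : ∀ i j, X i j = 0 ↔ ¬(i = j ∨ i = 0 ∨ j = 0) := fun i j => by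
    rw [hpat, hA]
    simp only [Fin.val_eq_zero_iff, ite_eq_right_iff, one_ne_zero, imp_false]
  have hpos : ∀ i j, i = j ∨ i = 0 ∨ j = 0 → 0 < X i j := fun i j h =>
    (hX.1 i j).lt_of_ne' fun h0 => (hsupp i j).1 h0 h
  have hzero : ∀ i j, i ≠ j → i ≠ 0 → j ≠ 0 → X i j = 0 := fun i j hij hi hj =>
    (hsupp i j).2 (by tauto)
  have hsum := loopyStar_row_zero_sum hX hR hpos hzero
  have hn' : (5 : ℝ) ≤ n := by exact_mod_cast hn
  nlinarith [hpos 0 0 (.inl rfl)]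
end
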